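/- Let G be a countably infinite, locally finite graph, Γ a vertex-transitive subgroup of Aut(G), and let P be a probability measure on Ω_G that is Γ-invariant and ergodic with respect to the action of Γ, satisfies P[U(n) ≠ ∅] > 0, and is such that P-almost surely the multigraph of n has a unique infinite cluster with at most 2 ends. Then for every vertex x: (i) P[ f(x,y,n) ≥ 2 ] → 0 as d(0,y) → ∞; and (ii) P[ f(x,∞,n) > 2 ] = 0. -/

import Mathlib

set_option linter.unusedSectionVars false

open MeasureTheory Filter Topology

noncomputable section

namespace RC

variable {V : Type*} [DecidableEq V]

/-- The real spin value of a Boolean spin: `true ↦ +1`, `false ↦ -1`. -/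
def spin (b : Bool) : ℝ := if b then 1 else -1

/-- The off-diagonal unordered pairs inside a finite vertex set `Λ`. -/
def pairs (Λ : Finset V) : Finset (Sym2 V) := Λ.sym2.filter fun e => ¬ e.IsDiag

/-- Product of a function over the two endpoints of an unordered pair. -/
def sprod (g : V → ℝ) : Sym2 V → ℝ :=
  Sym2.lift ⟨fun u v => g u * g v, fun u v => mul_comm (g u) (g v)⟩

/-- Extend a finite-volume spin configuration to the full vertex set by `0`. -/
def extCfg (Λ : Finset V) (σ : {x // x ∈ Λ} → Bool) (v : V) : ℝ :=
  if h : v ∈ Λ then spin (σ ⟨v, h⟩) else 0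

/-- The boundary field felt at `x ∈ Λ` from the boundary condition `τ` outside `Λ`. -/
def bField (J : Sym2 V → ℝ) (Λ : Finset V) (τ : V → ℝ) (x : V) : ℝ :=
  ∑' y : V, if y ∈ Λ then 0 else J s(x, y) * τ y

/-- The finite-volume Ising Hamiltonian on `Λ` with boundary condition `τ`. -/
def ham (J : Sym2 V → ℝ) (Λ : Finset V) (τ : V → ℝ) (σ : {x // x ∈ Λ} → Bool) : ℝ :=
  -(∑ e ∈ pairs Λ, J e * sprod (extCfg Λ σ) e)
    - ∑ x ∈ Λ.attach, spin (σ x) * bField J Λ τ (x : V)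

/-- The finite-volume Ising partition function. -/
def Zspin (J : Sym2 V → ℝ) (Λ : Finset V) (β : ℝ) (τ : V → ℝ) : ℝ :=
  ∑ σ : {x // x ∈ Λ} → Bool, Real.exp (-β * ham J Λ τ σ)

/-- Finite-volume Ising expectation of an observable `f`. -/
def expval (J : Sym2 V → ℝ) (Λ : Finset V) (β : ℝ) (τ : V → ℝ)
    (f : ({x // x ∈ Λ} → Bool) → ℝ) : ℝ :=
  (∑ σ : {x // x ∈ Λ} → Bool, Real.exp (-β * ham J Λ τ σ) * f σ) / Zspin J Λ β τ

/-- Finite-volume two-point function `⟨σ_x σ_y⟩`. -/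
def corr (J : Sym2 V → ℝ) (Λ : Finset V) (β : ℝ) (τ : V → ℝ) (x y : V) : ℝ :=
  expval J Λ β τ fun σ => extCfg Λ σ x * extCfg Λ σ y

/-- Finite-volume one-point function `⟨σ_x⟩`. -/
def mag (J : Sym2 V → ℝ) (Λ : Finset V) (β : ℝ) (τ : V → ℝ) (x : V) : ℝ :=
  expval J Λ β τ fun σ => extCfg Λ σ x

/-- Restriction of a configuration on `Λ'` to a configuration on `Λ` (junk `false`
outside `Λ'`; for `Λ ⊆ Λ'` this is the genuine restriction). -/
def restrictCfg (Λ Λ' : Finset V) (σ : {x // x ∈ Λ'} → Bool) : {x // x ∈ Λ} → Bool :=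
  fun x => if h : (x : V) ∈ Λ' then σ ⟨x, h⟩ else false

open scoped Classical in
/-- The ball of radius `n` around `o` in the graph distance, as a `Finset`
(it is a finite set whenever the graph is connected and locally finite). -/
def ball (G : SimpleGraph V) (o : V) (n : ℕ) : Finset V :=
  if h : {x : V | G.dist o x ≤ n}.Finite then h.toFinset else ∅

/-- The outer vertex boundary `∂A = {x ∉ A : x adjacent to some y ∈ A}`. -/
def vBoundary (G : SimpleGraph V) (hlf : G.LocallyFinite) (A : Finset V) : Finset V :=
  (A.biUnion fun y => haveI := hlf y; G.neighborFinset y).filter fun x => x ∉ A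

/-- Amenability: the infimum of `|∂A|/|A|` over finite nonempty `A` is zero. -/
def Amenable (G : SimpleGraph V) (hlf : G.LocallyFinite) : Prop :=
  ∀ ε : ℝ, 0 < ε → ∃ A : Finset V, A.Nonempty ∧ ((vBoundary G hlf A).card : ℝ) < ε * A.card

/-- The DLR condition: `μ` is a Gibbs state for the Ising model at inverse temperature `β`. -/
def IsGibbs (J : Sym2 V → ℝ) (β : ℝ) (μ : Measure (V → Bool)) : Prop :=
  ∀ (Λ : Finset V) (f : ({x // x ∈ Λ} → Bool) → ℝ),
    (∫ σ, f (fun x => σ x.1) ∂μ) = ∫ τ, expval J Λ β (fun v => spin (τ v)) f ∂μ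

/-- `Γ`-invariance of a measure on spin configurations. -/
def cfgInvariant (Γ : Subgroup (Equiv.Perm V)) (μ : Measure (V → Bool)) : Prop :=
  ∀ φ ∈ Γ, Measure.map (fun (σ : V → Bool) (v : V) => σ (φ v)) μ = μ

/-! ### Random currents -/

/-- Currents supported on the (off-diagonal) pairs of `Λ`. -/
abbrev CurrentOn (Λ : Finset V) : Type _ := {n : Sym2 V → ℕ // ∀ e, n e ≠ 0 → e ∈ pairs Λ}

/-- The weight `ω_β(n) = ∏ (βJ_e)^(n_e) / n_e!`. -/
def wt (J : Sym2 V → ℝ) (β : ℝ) (Λ : Finset V) (n : Sym2 V → ℕ) : ℝ :=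
  ∏ e ∈ pairs Λ, (β * J e) ^ n e / (n e).factorial

/-- The sources `∂n` of a current: the vertices of `Λ` with odd degree. -/
def srcF (Λ : Finset V) (n : Sym2 V → ℕ) : Finset V :=
  Λ.filter fun x => (∑ y ∈ Λ, n s(x, y)) % 2 = 1

/-- Total weight of the currents on `Λ` with source set `A`. -/
def totalWt (J : Sym2 V → ℝ) (β : ℝ) (Λ : Finset V) (A : Finset V) : ℝ :=
  ∑' m : CurrentOn Λ, if srcF Λ m.1 = A then wt J β Λ m.1 else 0

open scoped Classical in
/-- The probability of the event `E` under the random current measure `P^A_{Λ,β}`. -/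
def curProb (J : Sym2 V → ℝ) (β : ℝ) (Λ : Finset V) (A : Finset V)
    (E : (Sym2 V → ℕ) → Prop) : ℝ :=
  (∑' m : CurrentOn Λ, if srcF Λ m.1 = A ∧ E m.1 then wt J β Λ m.1 else 0)
    / totalWt J β Λ A

/-- `x` and `y` are connected in the multigraph of the current `n` by a path whose
vertices all lie in `S`. -/
def connOn (n : Sym2 V → ℕ) (S : Set V) (x y : V) : Prop :=
  ∃ l : List V, l.head? = some x ∧ l.getLast? = some y ∧
    List.Chain' (fun u v => 0 < n s(u, v)) l ∧ ∀ v ∈ l, v ∈ S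

/-- `x` and `y` are connected in the multigraph of the current `n`. -/
def conn (n : Sym2 V → ℕ) (x y : V) : Prop := connOn n Set.univ x y

/-- The cluster of `x` in the multigraph of the current `n`. -/
def cluster (n : Sym2 V → ℕ) (x : V) : Set V := {y | conn n x y}

/-- `x` lies in an infinite cluster of the current `n`. -/
def inInf (n : Sym2 V → ℕ) (x : V) : Prop := (cluster n x).Infinite

/-- The current `n` with its value on the pair `e₀` set to zero. -/
def dropE (n : Sym2 V → ℕ) (e₀ : Sym2 V) (e : Sym2 V) : ℕ := if e = e₀ then 0 else n e

/-- The event `𝒜_{x,y}`: `n_{xy} = 1`, and in `n_{[xy]}` both `x` and `y` lie in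
infinite clusters but are not connected to each other. -/
def eventA (x y : V) (n : Sym2 V → ℕ) : Prop :=
  n s(x, y) = 1 ∧ inInf (dropE n s(x, y)) x ∧ inInf (dropE n s(x, y)) y ∧
    ¬ conn (dropE n s(x, y)) x y

/-- `𝖴(n) = { {x,y} : n ∈ 𝒜_{x,y} }`. -/
def Uset (n : Sym2 V → ℕ) : Set (Sym2 V) := {e | ∃ x y, e = s(x, y) ∧ eventA x y n}

/-- There is at most one infinite cluster. -/
def uniqueInfCluster (n : Sym2 V → ℕ) : Prop :=
  ∀ x y, inInf n x → inInf n y → conn n x y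

/-- The cluster of `x` has at most `k` ends: after removing any finite vertex set `S`,
there are no `k+1` vertices of the cluster lying in pairwise distinct infinite
connected components of the complement of `S`. -/
def atMostEnds (n : Sym2 V → ℕ) (x : V) (k : ℕ) : Prop :=
  ∀ S T : Finset V,
    (∀ y ∈ T, conn n x y ∧ y ∉ S ∧ {z | connOn n ((S : Set V))ᶜ y z}.Infinite) →
    (∀ y ∈ T, ∀ z ∈ T, y ≠ z → ¬ connOn n ((S : Set V))ᶜ y z) → T.card ≤ k

/-- Number of times the unordered edge `e` is traversed by the walk `l`. -/
def wcount : List V → Sym2 V → ℕ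
  | [], _ => 0
  | [_], _ => 0
  | a :: b :: t, e => (if s(a, b) = e then 1 else 0) + wcount (b :: t) e

/-- There exist `k` pairwise edge-disjoint (with parallel edges counted with
multiplicity) self-avoiding paths from `x` to `y` in the multigraph of `n`. -/
def kPaths (n : Sym2 V → ℕ) (x y : V) (k : ℕ) : Prop :=
  ∃ w : Fin k → List V,
    (∀ j, (w j).head? = some x ∧ (w j).getLast? = some y ∧ (w j).Nodup) ∧
    ∀ e, (∑ j, wcount (w j) e) ≤ n e

open scoped Classical in
/-- Whether the one-sided infinite path `p` uses the unordered edge `e`. -/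
def useE (p : ℕ → V) (e : Sym2 V) : ℕ := if ∃ i, s(p i, p (i + 1)) = e then 1 else 0

/-- There exist `k` pairwise edge-disjoint (with multiplicity) one-sided infinite
self-avoiding paths started at `x` in the multigraph of `n`. -/
def kInfPaths (n : Sym2 V → ℕ) (x : V) (k : ℕ) : Prop :=
  ∃ p : Fin k → ℕ → V,
    (∀ j, Function.Injective (p j) ∧ p j 0 = x) ∧ ∀ e, (∑ j, useE (p j) e) ≤ n e

/-! ### The ghost vertex `δ` -/

/-- The total coupling from `x` to the exterior of `Λ`. -/
def bWeight (J : Sym2 V → ℝ) (Λ : Finset V) (x : V) : ℝ :=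
  ∑' y : V, if y ∈ Λ then 0 else J s(x, y)

def optJfun (J : Sym2 V → ℝ) (Λ : Finset V) : Option V → Option V → ℝ
  | some x, some y => J s(x, y)
  | some x, none => bWeight J Λ x
  | none, some y => bWeight J Λ y
  | none, none => 0

lemma optJfun_comm (J : Sym2 V → ℝ) (Λ : Finset V) (a b : Option V) :
    optJfun J Λ a b = optJfun J Λ b a := by
  cases a with
  | none => cases b <;> rfl
  | some x =>
    cases b with
    | none => rfl
    | some y => show J s(x, y) = J s(y, x); rw [Sym2.eq_swap]

/-- The couplings on `Λ ∪ {δ}` (with `δ = none`): `J_{xδ} = Σ_{y ∉ Λ} J_{xy}`. -/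
def optJ (J : Sym2 V → ℝ) (Λ : Finset V) : Sym2 (Option V) → ℝ :=
  Sym2.lift ⟨optJfun J Λ, optJfun_comm J Λ⟩

/-- The vertex set `Λ ∪ {δ}`. -/
def optSet (Λ : Finset V) : Finset (Option V) := insert none (Λ.image some)

def optPairfun (n : Sym2 V → ℕ) : Option V → Option V → ℕ
  | some x, some y => n s(x, y)
  | _, _ => 0

lemma optPairfun_comm (n : Sym2 V → ℕ) (a b : Option V) :
    optPairfun n a b = optPairfun n b a := by
  cases a with
  | none => cases b <;> rfl
  | some x =>
    cases b with
    | none => rfl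
    | some y => show n s(x, y) = n s(y, x); rw [Sym2.eq_swap]

/-- View a current on `Λ` as a current on `Λ ∪ {δ}` (extend by zero). -/
def liftCur (n : Sym2 V → ℕ) : Sym2 (Option V) → ℕ :=
  Sym2.lift ⟨optPairfun n, optPairfun_comm n⟩

/-- Push a current on `Λ ∪ {δ}` down to `Λ` (discarding the pairs containing `δ`). -/
def projCur (n : Sym2 (Option V) → ℕ) : Sym2 V → ℕ := fun e => n (Sym2.map some e)

/-- The event `𝒜^f_{x,y} ⊆ Ω_{Λ∪δ}`: `n_{xy} = 1`, and in `n_{[xy]}` both `x` and `y`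
are connected to `δ` but `x` is not connected to `y` inside `Λ`. -/
def eventAf (Λ : Finset V) (x y : V) (n : Sym2 (Option V) → ℕ) : Prop :=
  n s(some x, some y) = 1 ∧
    conn (dropE n s(some x, some y)) (some x) (none : Option V) ∧
    conn (dropE n s(some x, some y)) (some y) (none : Option V) ∧
    ¬ connOn (dropE n s(some x, some y)) (some '' (Λ : Set V)) (some x) (some y)

/-! ### Current measures and infinite volume -/

/-- The random current measure `P^A_{Λ,β}` as a measure on `Ω_G = ℕ^{P₂(G)}`. -/
def curMeasure (J : Sym2 V → ℝ) (β : ℝ) (Λ : Finset V) (A : Finset V) :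
    Measure (Sym2 V → ℕ) :=
  (ENNReal.ofReal (totalWt J β Λ A))⁻¹ •
    Measure.sum fun m : CurrentOn Λ =>
      ENNReal.ofReal (if srcF Λ m.1 = A then wt J β Λ m.1 else 0) • Measure.dirac m.1

/-- The action of a vertex permutation on currents. -/
def curShift (φ : Equiv.Perm V) (n : Sym2 V → ℕ) : Sym2 V → ℕ :=
  fun e => n (Sym2.map φ e)

/-- `Γ`-invariance of a measure on currents. -/
def curInvariant (Γ : Subgroup (Equiv.Perm V)) (P : Measure (Sym2 V → ℕ)) : Prop :=
  ∀ φ ∈ Γ, Measure.map (curShift φ) P = P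

/-- Ergodicity of a measure on currents with respect to the `Γ`-action. -/
def curErgodic (Γ : Subgroup (Equiv.Perm V)) (P : Measure (Sym2 V → ℕ)) : Prop :=
  ∀ A : Set (Sym2 V → ℕ), MeasurableSet A → (∀ φ ∈ Γ, curShift φ ⁻¹' A = A) →
    P A = 0 ∨ P A = 1

/-- Weak convergence of a sequence of measures: convergence of integrals of all
bounded continuous functions. -/
def weakTendsto {Ω : Type*} [TopologicalSpace Ω] [MeasurableSpace Ω]
    (μseq : ℕ → Measure Ω) (P : Measure Ω) : Prop :=
  ∀ f : Ω → ℝ, Continuous f → (∃ M, ∀ ω, |f ω| ≤ M) →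
    Tendsto (fun n => ∫ ω, f ω ∂(μseq n)) atTop (nhds (∫ ω, f ω ∂P))

/-- `P` is a weak limit point of the sequence `μseq`. -/
def isWeakLimitPoint {Ω : Type*} [TopologicalSpace Ω] [MeasurableSpace Ω]
    (μseq : ℕ → Measure Ω) (P : Measure Ω) : Prop :=
  IsProbabilityMeasure P ∧ ∃ k : ℕ → ℕ, StrictMono k ∧ weakTendsto (fun i => μseq (k i)) P

/-- The sequence of sourceless (free) random current measures on the balls `B_n`. -/
def freeCurSeq (J : Sym2 V → ℝ) (β : ℝ) (G : SimpleGraph V) (o : V) :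
    ℕ → Measure (Sym2 V → ℕ) := fun n => curMeasure J β (ball G o n) ∅

/-- The sequence of sourceless random current measures on `B_n ∪ δ`, pushed to `Ω_G`. -/
def plusCurSeq (J : Sym2 V → ℝ) (β : ℝ) (G : SimpleGraph V) (o : V) :
    ℕ → Measure (Sym2 V → ℕ) := fun n =>
  Measure.map projCur (curMeasure (optJ J (ball G o n)) β (optSet (ball G o n)) ∅)

/-! ### FK-Ising -/

/-- The graph of open edges of a percolation configuration. -/
def fkGraph (c : Sym2 V → Bool) : SimpleGraph V where
  Adj x y := x ≠ y ∧ c s(x, y) = true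
  symm := ⟨by
    intro x y h
    refine ⟨h.1.symm, ?_⟩
    rw [Sym2.eq_swap]
    exact h.2⟩
  loopless := ⟨fun x h => h.1 rfl⟩

/-- Combine an interior configuration `ω` on the pairs of `Λ` with a boundary
condition `ξ` outside. -/
def combineCfg (Λ : Finset V) (ξ : Sym2 V → Bool) (ω : {e // e ∈ pairs Λ} → Bool)
    (e : Sym2 V) : Bool :=
  if h : e ∈ pairs Λ then ω ⟨e, h⟩ else ξ e

/-- The number of connected components intersecting `Λ`. -/
def kCount (c : Sym2 V → Bool) (Λ : Finset V) : ℕ :=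
  ((fun v => (fkGraph c).connectedComponentMk v) '' (Λ : Set V)).ncard

/-- The FK-Ising weight `2^{k^ξ(ω)} ∏ (e^{2βJ_e} - 1)^{ω_e}`. -/
def fkW (J : Sym2 V → ℝ) (β : ℝ) (Λ : Finset V) (ξ : Sym2 V → Bool)
    (ω : {e // e ∈ pairs Λ} → Bool) : ℝ :=
  2 ^ kCount (combineCfg Λ ξ ω) Λ *
    ∏ e : {e // e ∈ pairs Λ}, if ω e then Real.exp (2 * β * J e.1) - 1 else 1

/-- Finite-volume FK-Ising expectation with boundary condition `ξ`. -/
def fkExp (J : Sym2 V → ℝ) (β : ℝ) (Λ : Finset V) (ξ : Sym2 V → Bool)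
    (f : ({e // e ∈ pairs Λ} → Bool) → ℝ) : ℝ :=
  (∑ ω : {e // e ∈ pairs Λ} → Bool, fkW J β Λ ξ ω * f ω) /
    ∑ ω : {e // e ∈ pairs Λ} → Bool, fkW J β Λ ξ ω

/-- The DLR condition for infinite-volume FK-Ising measures. -/
def IsFKGibbs (J : Sym2 V → ℝ) (β : ℝ) (ν : Measure (Sym2 V → Bool)) : Prop :=
  ∀ (Λ : Finset V) (f : ({e // e ∈ pairs Λ} → Bool) → ℝ),
    (∫ ω, f (fun e => ω e.1) ∂ν) = ∫ ξ, fkExp J β Λ ξ f ∂ν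


section Aux

open Relation


lemma rtg_symm {α : Type*} {r : α → α → Prop} (hs : ∀ a b, r a b → r b a) {x y : α}
    (h : ReflTransGen r x y) : ReflTransGen r y x := by
  induction h with
  | refl => exact .refl
  | tail _ hstep ih => exact ReflTransGen.trans (ReflTransGen.single (hs _ _ hstep)) ih

lemma rtgMono {α : Type*} {r p : α → α → Prop} (hp : ∀ a b, r a b → p a b) {a b : α}
    (h : ReflTransGen r a b) : ReflTransGen p a b := ReflTransGen.mono hp _ _ h

lemma rtg_to_list {α : Type*} {R : α → α → Prop} {x y : α} (h : ReflTransGen R x y) :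
    ∃ l : List α, l.head? = some x ∧ l.getLast? = some y ∧ l.Chain' R ∧
      ∀ v ∈ l, v = x ∨ ∃ u, R u v := by
  induction h using ReflTransGen.head_induction_on with
  | refl => exact ⟨[y], rfl, rfl, List.isChain_singleton y, by simp⟩
  | head h' hrest ih =>
    obtain ⟨l, hh, hl, hc, hm⟩ := ih
    cases l with
    | nil => simp at hh
    | cons c0 t =>
      simp only [List.head?_cons, Option.some.injEq] at hh
      subst hh
      refine ⟨_ :: c0 :: t, rfl, ?_, ?_, ?_⟩
      · rw [List.getLast?_cons_cons]; exact hl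
      · simp only [List.Chain', List.isChain_cons_cons]; exact ⟨h', hc⟩
      · rintro v hv
        rcases List.mem_cons.mp hv with rfl | hv
        · exact Or.inl rfl
        · rcases hm v hv with rfl | hu
          · exact Or.inr ⟨_, h'⟩
          · exact Or.inr hu

lemma exists_list_iff_rtg {α : Type*} (R : α → α → Prop) (x y : α) :
    (∃ l : List α, l.head? = some x ∧ l.getLast? = some y ∧ l.Chain' R) ↔
      ReflTransGen R x y := by
  constructor
  · rintro ⟨l, hh, hl, hc⟩
    induction l generalizing x with
    | nil => simp at hh
    | cons a t ih =>
      cases t with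
      | nil =>
        simp only [List.head?_cons, Option.some.injEq] at hh
        simp only [List.getLast?_singleton, Option.some.injEq] at hl
        subst hh; subst hl; exact .refl
      | cons b t' =>
        simp only [List.head?_cons, Option.some.injEq] at hh
        subst hh
        rw [List.getLast?_cons_cons] at hl
        simp only [List.Chain', List.isChain_cons_cons] at hc
        exact ReflTransGen.head hc.1 (ih b rfl hl hc.2)
  · intro h
    obtain ⟨l, hh, hl, hc, -⟩ := rtg_to_list h
    exact ⟨l, hh, hl, hc⟩

lemma chain'_and_mem {α : Type*} {R : α → α → Prop} {S : Set α} :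
    ∀ l : List α, l.Chain' R → (∀ v ∈ l, v ∈ S) → l.Chain' (fun u v => R u v ∧ v ∈ S)
  | [] , _, _ => List.isChain_nil
  | [a], _, _ => List.isChain_singleton a
  | a :: b :: t, hc, hm => by
    simp only [List.Chain', List.isChain_cons_cons] at hc ⊢
    exact ⟨⟨hc.1, hm b (by simp)⟩,
      chain'_and_mem (b :: t) hc.2 (fun v hv => hm v (List.mem_cons_of_mem a hv))⟩


/-- The step relation of the multigraph of `n`. -/
def stepP (n : Sym2 V → ℕ) (u v : V) : Prop := 0 < n s(u, v)

/-- The step relation avoiding all cut edges. -/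
def stepU (n : Sym2 V → ℕ) (u v : V) : Prop := 0 < n s(u, v) ∧ s(u, v) ∉ Uset n

lemma stepP_symm {n : Sym2 V → ℕ} (u v : V) (h : stepP n u v) : stepP n v u := by
  unfold stepP at h ⊢; rwa [Sym2.eq_swap]

lemma stepU_symm {n : Sym2 V → ℕ} (u v : V) (h : stepU n u v) : stepU n v u := by
  unfold stepU at h ⊢; rwa [Sym2.eq_swap]

lemma connOn_iff_rtg {n : Sym2 V → ℕ} {S : Set V} {x y : V} :
    connOn n S x y ↔ x ∈ S ∧ ReflTransGen (fun u v => 0 < n s(u, v) ∧ v ∈ S) x y := by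
  constructor
  · rintro ⟨l, hh, hl, hc, hmem⟩
    have hx : x ∈ S := by
      cases l with
      | nil => simp at hh
      | cons a t =>
        simp only [List.head?_cons, Option.some.injEq] at hh
        exact hh ▸ hmem a (by simp)
    exact ⟨hx, (exists_list_iff_rtg _ x y).mp ⟨l, hh, hl, chain'_and_mem l hc hmem⟩⟩
  · rintro ⟨hx, h⟩
    obtain ⟨l, hh, hl, hc, hm⟩ := rtg_to_list h
    exact ⟨l, hh, hl, List.IsChain.imp (fun a b h => h.1) hc, fun v hv => by
      rcases hm v hv with rfl | ⟨u, hu⟩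
      · exact hx
      · exact hu.2⟩

lemma conn_iff_rtg {n : Sym2 V → ℕ} {x y : V} :
    conn n x y ↔ ReflTransGen (stepP n) x y := by
  rw [conn, connOn_iff_rtg]
  constructor
  · rintro ⟨-, h⟩; exact rtgMono (fun u v h => h.1) h
  · intro h; exact ⟨trivial, rtgMono (fun u v h => ⟨h, trivial⟩) h⟩

lemma cluster_eq_rtg (n : Sym2 V → ℕ) (x : V) :
    cluster n x = {z | ReflTransGen (stepP n) x z} := by
  ext z; exact conn_iff_rtg

lemma stepP_drop_le {n : Sym2 V → ℕ} {e : Sym2 V} {u v : V}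
    (h : stepP (dropE n e) u v) : stepP n u v := by
  unfold stepP at h ⊢; unfold dropE at h
  by_cases he : s(u, v) = e
  · rw [if_pos he] at h; omega
  · rwa [if_neg he] at h

lemma stepU_to_drop {n : Sym2 V → ℕ} {e : Sym2 V} (he : e ∈ Uset n) {u v : V}
    (h : stepU n u v) : stepP (dropE n e) u v := by
  unfold stepP dropE
  rw [if_neg (fun hc => h.2 (by rw [hc]; exact he))]
  exact h.1

lemma uset_one {n : Sym2 V → ℕ} {e : Sym2 V} (he : e ∈ Uset n) : n e = 1 := by
  obtain ⟨p, q, rfl, hA⟩ := he; exact hA.1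

lemma uset_nconn {n : Sym2 V → ℕ} {e : Sym2 V} {c d : V} (he : e ∈ Uset n)
    (hcd : e = s(c, d)) : ¬ ReflTransGen (stepP (dropE n e)) c d := by
  obtain ⟨p, q, rfl, hA⟩ := he
  intro h
  apply hA.2.2.2
  rw [conn_iff_rtg]
  rcases Sym2.eq_iff.mp hcd.symm with ⟨rfl, rfl⟩ | ⟨rfl, rfl⟩
  · exact h
  · exact rtg_symm (stepP_symm) h

lemma uset_inInf {n : Sym2 V → ℕ} {e : Sym2 V} {c d : V} (he : e ∈ Uset n)
    (hcd : e = s(c, d)) : inInf (dropE n e) c := by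
  obtain ⟨p, q, rfl, hA⟩ := he
  rcases Sym2.eq_iff.mp hcd.symm with ⟨rfl, rfl⟩ | ⟨rfl, rfl⟩
  · exact hA.2.1
  · exact hA.2.2.1

lemma inInf_mono_drop {n : Sym2 V → ℕ} {e : Sym2 V} {c : V}
    (h : inInf (dropE n e) c) : inInf n c := by
  refine Set.Infinite.mono ?_ h
  rw [cluster_eq_rtg, cluster_eq_rtg]
  exact fun z hz => rtgMono (fun u v h => stepP_drop_le h) hz

lemma both_endpoints {n : Sym2 V → ℕ} {e : Sym2 V} {c d : V} (he : e ∈ Uset n)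
    (hcd : e = s(c, d)) (h : ReflTransGen (stepU n) c d) : False :=
  uset_nconn he hcd (rtgMono (fun _ _ h => stepU_to_drop he h) h)

lemma reachU_congr {n : Sym2 V → ℕ} {x z : V} (h : ReflTransGen (stepU n) x z) :
    {w | ReflTransGen (stepU n) z w} = {w | ReflTransGen (stepU n) x w} := by
  ext w
  exact ⟨fun hw => h.trans hw, fun hw => (rtg_symm stepU_symm h).trans hw⟩

lemma connOn_closed {n : Sym2 V → ℕ} {T Cl : Set V} {b z : V}
    (hb : b ∈ Cl) (hcl : ∀ u w, u ∈ Cl → 0 < n s(u, w) → w ∉ T ∨ w ∈ Cl)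
    (h : connOn n T b z) : z ∈ Cl := by
  replace h := (connOn_iff_rtg.mp h).2
  induction h with
  | refl => exact hb
  | tail hprev hstep ih =>
    rcases hcl _ _ ih hstep.1 with hw | hw
    · exact absurd hstep.2 hw
    · exact hw

lemma connOn_of_rtg {n : Sym2 V → ℕ} {r : V → V → Prop} {S : Set V} {b z : V}
    (hr : ∀ u v, r u v → 0 < n s(u, v))
    (hS : ∀ w, ReflTransGen r b w → w ∈ S)
    (h : ReflTransGen r b z) : connOn n S b z := by
  rw [connOn_iff_rtg]
  refine ⟨hS b .refl, ?_⟩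
  induction h with
  | refl => exact .refl
  | tail hprev hstep ih => exact ih.tail ⟨hr _ _ hstep, hS _ (hprev.tail hstep)⟩

lemma ends3 {n : Sym2 V → ℕ}
    (hUq : uniqueInfCluster n) (hE : ∀ x, inInf n x → atMostEnds n x 2)
    (y : Fin 3 → V) (S : Finset V)
    (hinf : ∀ i, inInf n (y i)) (hS : ∀ i, y i ∉ S)
    (hcomp : ∀ i, {z | connOn n ((S : Set V))ᶜ (y i) z}.Infinite)
    (hsep : ∀ i j, i ≠ j → ¬ connOn n ((S : Set V))ᶜ (y i) (y j))
    (hdist : Function.Injective y) : False := by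
  have hT : (Finset.image y Finset.univ).card = 3 := by
    rw [Finset.card_image_of_injective _ hdist, Finset.card_univ, Fintype.card_fin]
  have h2 := hE (y 0) (hinf 0) S (Finset.image y Finset.univ) ?_ ?_
  · omega
  · intro z hz
    obtain ⟨i, -, rfl⟩ := Finset.mem_image.mp hz
    exact ⟨hUq _ _ (hinf 0) (hinf i), hS i, hcomp i⟩
  · intro z hz w hw hne
    obtain ⟨i, -, rfl⟩ := Finset.mem_image.mp hz
    obtain ⟨j, -, rfl⟩ := Finset.mem_image.mp hw
    exact hsep i j (fun hij => hne (by rw [hij])) 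

lemma no_three_adjacent {n : Sym2 V → ℕ}
    (hUq : uniqueInfCluster n) (hE : ∀ x, inInf n x → atMostEnds n x 2)
    {v : V} {e : Fin 3 → Sym2 V} {p q : Fin 3 → V}
    (hpq : ∀ i, e i = s(p i, q i))
    (hW : ∀ i, e i ∈ Uset n)
    (hreach : ∀ i, ReflTransGen (stepU n) v (p i))
    (hdist : ∀ i j, i ≠ j → e i ≠ e j) : False := by
  classical
  set A : Fin 3 → Set V := fun i => {z | ReflTransGen (stepP (dropE n (e i))) (p i) z} with hA
  set B : Fin 3 → Set V := fun i => {z | ReflTransGen (stepP (dropE n (e i))) (q i) z} with hB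
  have hAB : ∀ i z, z ∈ A i → z ∈ B i → False := by
    intro i z hzA hzB
    exact uset_nconn (hW i) (hpq i) (ReflTransGen.trans hzA (rtg_symm stepP_symm hzB))
  have hpA : ∀ i j, p j ∈ A i := by
    intro i j
    exact rtgMono
      (fun _ _ h => stepU_to_drop (hW i) h) ((rtg_symm stepU_symm (hreach i)).trans (hreach j))
  have hqv : ∀ i, ¬ ReflTransGen (stepU n) v (q i) := by
    intro i hq
    exact both_endpoints (hW i) (hpq i) ((rtg_symm stepU_symm (hreach i)).trans hq)
  have hqA : ∀ i j, i ≠ j → q j ∈ A i := by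
    intro i j hij
    refine ReflTransGen.tail (hpA i j) ?_
    show 0 < dropE n (e i) s(p j, q j)
    rw [← hpq j, dropE, if_neg (hdist j i (fun h => hij h.symm)), uset_one (hW j)]
    omega
  have hqB : ∀ i, q i ∈ B i := fun i => .refl
  have hBA : ∀ i j, i ≠ j → B j ⊆ A i := by
    intro i j hij z hz
    simp only [hB, Set.mem_setOf_eq] at hz
    induction hz with
    | refl => exact hqA i j hij
    | tail hprev hstep ih =>
      rename_i z' z
      by_cases hik : s(z', z) = e i
      · exfalso
        rcases Sym2.eq_iff.mp (hik.trans (hpq i)) with ⟨rfl, rfl⟩ | ⟨rfl, rfl⟩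
        · exact hAB j (p i) (hpA j i) hprev
        · exact hAB i (q i) ih (hqB i)
      · refine ReflTransGen.tail ih ?_
        show 0 < dropE n (e i) s(z', z)
        rw [dropE, if_neg hik]
        exact stepP_drop_le hstep
  have hBinf : ∀ i, (B i).Infinite := by
    intro i
    have := uset_inInf (hW i) ((hpq i).trans (Sym2.eq_swap))
    rwa [inInf, cluster_eq_rtg] at this
  have hpmem : ∀ i : Fin 3, p i ∈ (({p 0, p 1, p 2} : Finset V) : Set V) := by
    intro i; fin_cases i <;> simp
  have hBp : ∀ i j, p j ∉ B i := by
    intro i j hmem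
    exact hAB i (p j) (hpA i j) hmem
  refine ends3 hUq hE q {p 0, p 1, p 2} ?_ ?_ ?_ ?_ ?_
  · intro i
    exact inInf_mono_drop (uset_inInf (hW i) ((hpq i).trans (Sym2.eq_swap)))
  · intro i hmem
    simp only [Finset.mem_insert, Finset.mem_singleton] at hmem
    rcases hmem with h | h | h <;> exact hqv i (h ▸ hreach _)
  · intro i
    refine Set.Infinite.mono ?_ (hBinf i)
    intro z hz
    refine connOn_of_rtg (fun u w h => stepP_drop_le h) ?_ hz
    intro w hw
    intro hmem
    simp only [Finset.coe_insert, Finset.coe_singleton, Set.mem_insert_iff,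
      Set.mem_singleton_iff] at hmem
    rcases hmem with h | h | h <;> · subst h; exact hBp i _ hw
  · intro i j hij hcon
    have hzB : q j ∈ B i := by
      refine connOn_closed (hqB i) ?_ hcon
      intro u w hu hw
      by_cases hik : s(u, w) = e i
      · rcases Sym2.eq_iff.mp (hik.trans (hpq i)) with ⟨rfl, rfl⟩ | ⟨rfl, rfl⟩
        · exact (hBp i i hu).elim
        · left
          simp only [Set.mem_compl_iff, not_not]
          exact hpmem i
      · right
        refine ReflTransGen.tail hu ?_
        show 0 < dropE n (e i) s(u, w)
        rw [dropE, if_neg hik]; exact hw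
    exact hAB i (q j) (hBA i j hij (hqB j)) hzB
  · intro i j hij
    by_contra hne
    have h2 : q j ∈ A i := hBA i j hne (hqB j)
    rw [← hij] at h2
    exact hAB i (q i) h2 (hqB i)

lemma finite_of_no_three {α : Type*} {S : Set α}
    (h : ¬ ∃ a b c, a ∈ S ∧ b ∈ S ∧ c ∈ S ∧ a ≠ b ∧ a ≠ c ∧ b ≠ c) : S.Finite := by
  classical
  by_cases h0 : S = ∅
  · simp [h0]
  obtain ⟨a, ha⟩ := Set.nonempty_iff_ne_empty.mpr h0
  by_cases h1 : S ⊆ {a}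
  · exact (Set.finite_singleton a).subset h1
  obtain ⟨b, hb, hba⟩ : ∃ b ∈ S, b ≠ a := by
    by_contra hc; push_neg at hc
    exact h1 (fun c hcS => hc c hcS)
  refine ((Set.finite_singleton b).insert a).subset ?_
  intro c hc
  by_contra hcm
  simp only [Set.mem_insert_iff, Set.mem_singleton_iff, not_or] at hcm
  exact h ⟨a, b, c, ha, hb, hc, Ne.symm hba, fun h' => hcm.1 h'.symm, fun h' => hcm.2 h'.symm⟩

lemma sym2_mem_finite (e : Sym2 V) : {w : V | w ∈ e}.Finite := by
  induction e using Sym2.ind with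
  | _ c d =>
    refine ((Set.finite_singleton d).insert c).subset ?_
    intro w hw
    rcases Sym2.mem_iff.mp hw with h | h <;> simp [h]

lemma no_three_adjacent' {n : Sym2 V → ℕ}
    (hUq : uniqueInfCluster n) (hE : ∀ x, inInf n x → atMostEnds n x 2)
    {v : V} {g1 g2 g3 : Sym2 V} {p1 q1 p2 q2 p3 q3 : V}
    (h1 : g1 = s(p1, q1)) (h2 : g2 = s(p2, q2)) (h3 : g3 = s(p3, q3))
    (hU1 : g1 ∈ Uset n) (hU2 : g2 ∈ Uset n) (hU3 : g3 ∈ Uset n)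
    (hr1 : ReflTransGen (stepU n) v p1) (hr2 : ReflTransGen (stepU n) v p2)
    (hr3 : ReflTransGen (stepU n) v p3)
    (d12 : g1 ≠ g2) (d13 : g1 ≠ g3) (d23 : g2 ≠ g3) : False := by
  refine no_three_adjacent hUq hE (v := v) (e := ![g1, g2, g3]) (p := ![p1, p2, p3])
    (q := ![q1, q2, q3]) ?_ ?_ ?_ ?_
  · intro i; fin_cases i <;> assumption
  · intro i; fin_cases i <;> assumption
  · intro i; fin_cases i <;> assumption
  · intro i j hij
    fin_cases i <;> fin_cases j <;>
      simp only [Matrix.cons_val_zero, Matrix.cons_val_one, Matrix.head_cons,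
        Matrix.cons_val_two, Matrix.tail_cons] <;>
      first
        | exact absurd rfl hij
        | exact d12 | exact d13 | exact d23
        | exact d12.symm | exact d13.symm | exact d23.symm

lemma no_seven {n : Sym2 V → ℕ}
    (hUq : uniqueInfCluster n) (hE : ∀ x, inInf n x → atMostEnds n x 2)
    (r : Finset V) (hcard : r.card = 7)
    (hinfc : ∀ v ∈ r, {z | ReflTransGen (stepU n) v z}.Infinite)
    (hpair : ∀ v ∈ r, ∀ w ∈ r, v ≠ w → ¬ ReflTransGen (stepU n) v w) : False := by
  classical
  set partner : V → V → Prop := fun v w => ∃ g : Sym2 V, g ∈ Uset n ∧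
    ∃ pp qq, g = s(pp, qq) ∧ ReflTransGen (stepU n) v pp ∧ ReflTransGen (stepU n) w qq
    with hpartner
  have hpsymm : ∀ v w, partner v w → partner w v := by
    rintro v w ⟨g, hg, pp, qq, hgpq, hh1, hh2⟩
    exact ⟨g, hg, qq, pp, hgpq.trans (Sym2.eq_swap), hh2, hh1⟩
  have hpcard : ∀ v ∈ r, (r.filter (fun w => w ≠ v ∧ partner v w)).card ≤ 2 := by
    intro v hv
    by_contra hgt
    push_neg at hgt
    obtain ⟨t, ht, htc⟩ := Finset.exists_subset_card_eq (s := r.filter (fun w => w ≠ v ∧ partner v w)) (n := 3) (by omega)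
    obtain ⟨w1, w2, w3, h12, h13, h23, rfl⟩ := Finset.card_eq_three.mp htc
    have hw : ∀ w ∈ ({w1, w2, w3} : Finset V), w ∈ r ∧ w ≠ v ∧ partner v w := by
      intro w hwm
      have := ht hwm
      rw [Finset.mem_filter] at this
      exact ⟨this.1, this.2⟩
    have hw1 := hw w1 (Finset.mem_insert_self w1 {w2, w3})
    have hw2 := hw w2 (Finset.mem_insert_of_mem (Finset.mem_insert_self w2 {w3}))
    have hw3 := hw w3 (Finset.mem_insert_of_mem (Finset.mem_insert_of_mem (Finset.mem_singleton_self w3)))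
    obtain ⟨g1, hg1, p1, q1, he1, hvp1, hwq1⟩ := hw1.2.2
    obtain ⟨g2, hg2, p2, q2, he2, hvp2, hwq2⟩ := hw2.2.2
    obtain ⟨g3, hg3, p3, q3, he3, hvp3, hwq3⟩ := hw3.2.2
    have hbridge : ∀ (wa wb : V) (ga gb : Sym2 V) (pa qa pb qb : V),
        wa ∈ r → wb ∈ r → wa ≠ wb → wa ≠ v →
        ga = s(pa, qa) → gb = s(pb, qb) →
        ReflTransGen (stepU n) v pa → ReflTransGen (stepU n) wa qa →
        ReflTransGen (stepU n) v pb → ReflTransGen (stepU n) wb qb →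
        ga ≠ gb := by
      rintro wa wb ga gb pa qa pb qb har hbr hab hav rfl hgb hvpa hwqa hvpb hwqb heq
      rw [hgb] at heq
      rcases Sym2.eq_iff.mp heq with ⟨rfl, rfl⟩ | ⟨rfl, rfl⟩
      · exact hpair wa har wb hbr hab (hwqa.trans (rtg_symm stepU_symm hwqb))
      · exact hpair wa har v hv hav (hwqa.trans (rtg_symm stepU_symm hvpb))
    exact no_three_adjacent' hUq hE he1 he2 he3 hg1 hg2 hg3 hvp1 hvp2 hvp3
      (hbridge w1 w2 g1 g2 p1 q1 p2 q2 hw1.1 hw2.1 h12 hw1.2.1 he1 he2 hvp1 hwq1 hvp2 hwq2)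
      (hbridge w1 w3 g1 g3 p1 q1 p3 q3 hw1.1 hw3.1 h13 hw1.2.1 he1 he3 hvp1 hwq1 hvp3 hwq3)
      (hbridge w2 w3 g2 g3 p2 q2 p3 q3 hw2.1 hw3.1 h23 hw2.2.1 he2 he3 hvp2 hwq2 hvp3 hwq3)
  -- greedy selection
  have hstep : ∀ s : Finset V, s ⊆ r → 1 ≤ s.card →
      ∃ a ∈ s, ∃ s' : Finset V, s' ⊆ s ∧ s.card - 3 ≤ s'.card ∧
        ∀ b ∈ s', b ≠ a ∧ ¬ partner a b ∧ ¬ partner b a := by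
    intro s hsr hs1
    obtain ⟨a, ha⟩ := Finset.card_pos.mp (Nat.lt_of_lt_of_le Nat.zero_lt_one hs1)
    refine ⟨a, ha, s \ insert a (r.filter (fun w => w ≠ a ∧ partner a w)), ?_, ?_, ?_⟩
    · exact Finset.sdiff_subset
    · have hb : (insert a (r.filter (fun w => w ≠ a ∧ partner a w))).card ≤ 3 := by
        refine le_trans (Finset.card_insert_le _ _) ?_
        have := hpcard a (hsr ha)
        omega
      have := Finset.le_card_sdiff (insert a (r.filter (fun w => w ≠ a ∧ partner a w))) s
      omega
    · intro b hb
      simp only [Finset.mem_sdiff, Finset.mem_insert, Finset.mem_filter] at hb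
      push_neg at hb
      have hbr : b ∈ r := hsr hb.1
      have hba : b ≠ a := hb.2.1
      have hnp : ¬ partner a b := fun hp => (hb.2.2 hbr hba) hp
      exact ⟨hba, hnp, fun hp => hnp (hpsymm _ _ hp)⟩
  obtain ⟨a1, ha1, s2, hs2r, hs2c, hs2p⟩ := hstep r (le_refl _) (by omega)
  obtain ⟨a2, ha2, s3, hs3r, hs3c, hs3p⟩ := hstep s2 hs2r (by omega)
  obtain ⟨a3, ha3⟩ := Finset.card_pos.mp (by omega : 0 < s3.card)
  have ha3s2 : a3 ∈ s2 := hs3r ha3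
  set ii : Fin 3 → V := ![a1, a2, a3] with hii
  have hiir : ∀ t, ii t ∈ r := by
    intro t; fin_cases t
    · exact ha1
    · exact hs2r ha2
    · exact hs2r ha3s2
  have d21 : a2 ≠ a1 := (hs2p a2 ha2).1
  have d31 : a3 ≠ a1 := (hs2p a3 ha3s2).1
  have d32 : a3 ≠ a2 := (hs3p a3 ha3).1
  have p12 : ¬ partner a1 a2 := (hs2p a2 ha2).2.1
  have p21 : ¬ partner a2 a1 := (hs2p a2 ha2).2.2
  have p13 : ¬ partner a1 a3 := (hs2p a3 ha3s2).2.1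
  have p31 : ¬ partner a3 a1 := (hs2p a3 ha3s2).2.2
  have p23 : ¬ partner a2 a3 := (hs3p a3 ha3).2.1
  have p32 : ¬ partner a3 a2 := (hs3p a3 ha3).2.2
  have hiid : ∀ t t', t ≠ t' → ii t ≠ ii t' := by
    intro t t' htt
    fin_cases t <;> fin_cases t' <;>
      simp only [hii, Matrix.cons_val_zero, Matrix.cons_val_one, Matrix.head_cons,
        Matrix.cons_val_two, Matrix.tail_cons] <;>
      first
        | exact absurd rfl htt
        | exact d21.symm | exact d31.symm | exact d32.symm
        | exact d21 | exact d31 | exact d32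
  have hiinp : ∀ t t', t ≠ t' → ¬ partner (ii t) (ii t') := by
    intro t t' htt
    fin_cases t <;> fin_cases t' <;>
      simp only [hii, Matrix.cons_val_zero, Matrix.cons_val_one, Matrix.head_cons,
        Matrix.cons_val_two, Matrix.tail_cons] <;>
      first
        | exact absurd rfl htt
        | exact p12 | exact p21 | exact p13 | exact p31 | exact p23 | exact p32
  have hpairA : ∀ t t', t ≠ t' → ¬ ReflTransGen (stepU n) (ii t) (ii t') := by
    intro t t' htt
    exact hpair (ii t) (hiir t) (ii t') (hiir t') (hiid t t' htt)
  set K : Fin 3 → Set V := fun t => {z | ReflTransGen (stepU n) (ii t) z} with hK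
  set NE : Fin 3 → Set (Sym2 V) := fun t => {g | g ∈ Uset n ∧
    ∃ pp qq, g = s(pp, qq) ∧ ReflTransGen (stepU n) (ii t) pp} with hNE
  have hNEfin : ∀ t, (NE t).Finite := by
    intro t
    refine finite_of_no_three ?_
    rintro ⟨g1, g2, g3, ⟨hg1, p1, q1, he1, hr1⟩, ⟨hg2, p2, q2, he2, hr2⟩,
      ⟨hg3, p3, q3, he3, hr3⟩, d12, d13, d23⟩
    exact no_three_adjacent' hUq hE he1 he2 he3 hg1 hg2 hg3 hr1 hr2 hr3 d12 d13 d23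
  set EP : Fin 3 → Set V := fun t => ⋃ g ∈ NE t, {w | w ∈ g} with hEP
  have hEPfin : ∀ t, (EP t).Finite := fun t =>
    Set.Finite.biUnion (hNEfin t) (fun g _ => sym2_mem_finite g)
  have hSfin : ((EP 0 ∪ EP 1 ∪ EP 2) \ (K 0 ∪ K 1 ∪ K 2)).Finite :=
    (((hEPfin 0).union (hEPfin 1)).union (hEPfin 2)).diff
  set S : Finset V := hSfin.toFinset with hS
  have hKt : ∀ t z, z ∈ K t → z ∉ (S : Set V) := by
    intro t z hz hzS
    rw [hS, Set.Finite.coe_toFinset] at hzS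
    refine hzS.2 ?_
    fin_cases t
    · exact Or.inl (Or.inl hz)
    · exact Or.inl (Or.inr hz)
    · exact Or.inr hz
  have hclosed : ∀ t u w, u ∈ K t → 0 < n s(u, w) →
      w ∉ ((S : Set V))ᶜ ∨ w ∈ K t := by
    intro t u w hu hw
    by_cases hUe : s(u, w) ∈ Uset n
    · have hwEP : w ∈ EP t := by
        rw [hEP]
        exact Set.mem_biUnion (show s(u, w) ∈ NE t from ⟨hUe, u, w, rfl, hu⟩)
          (Sym2.mem_iff.mpr (Or.inr rfl))
      by_cases hwK : w ∈ K 0 ∪ K 1 ∪ K 2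
      · have : ∃ t', w ∈ K t' := by
          rcases hwK with (h | h) | h
          · exact ⟨0, h⟩
          · exact ⟨1, h⟩
          · exact ⟨2, h⟩
        obtain ⟨t', hwt'⟩ := this
        by_cases htt : t' = t
        · exact Or.inr (htt ▸ hwt')
        · exact absurd ⟨s(u, w), hUe, u, w, rfl, hu, hwt'⟩ (hiinp t t' (fun h => htt h.symm))
      · left
        simp only [Set.mem_compl_iff, not_not]
        rw [hS, Set.Finite.coe_toFinset]
        refine ⟨?_, hwK⟩
        fin_cases t
        · exact Or.inl (Or.inl hwEP)
        · exact Or.inl (Or.inr hwEP)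
        · exact Or.inr hwEP
    · exact Or.inr (hu.tail ⟨hw, hUe⟩)
  refine ends3 hUq hE ii S ?_ ?_ ?_ ?_ ?_
  · intro t
    refine Set.Infinite.mono ?_ (hinfc (ii t) (hiir t))
    rw [cluster_eq_rtg]
    exact fun z hz => rtgMono (fun u v h => h.1) hz
  · intro t hmem
    exact hKt t (ii t) .refl hmem
  · intro t
    refine Set.Infinite.mono ?_ (hinfc (ii t) (hiir t))
    intro z hz
    exact connOn_of_rtg (fun u v h => h.1) (fun w hw => hKt t w hw) hz
  · intro t t' htt hcon
    exact hpairA t t' htt (connOn_closed (Cl := K t) .refl (hclosed t) hcon)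
  · intro t t' h
    by_contra htt
    exact hiid t t' htt h

/-- `v` is an endpoint of a cut edge and its cut-free component is infinite. -/
def zetaP (v : V) (n : Sym2 V → ℕ) : Prop :=
  (∃ w, s(v, w) ∈ Uset n) ∧ {z | Relation.ReflTransGen (stepU n) v z}.Infinite

lemma zeta_card_bound [Countable V] {n : Sym2 V → ℕ}
    (hUq : uniqueInfCluster n) (hE : ∀ x, inInf n x → atMostEnds n x 2)
    (F : Finset V) (hF : ∀ v ∈ F, zetaP v n) : F.card ≤ 12 := by
  classical
  by_contra hlt
  push_neg at hlt
  obtain ⟨ι, hι⟩ := exists_injective_nat V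
  set c2 : V → V → Prop := fun v w => ReflTransGen (stepU n) v w with hc2
  have hc2refl : ∀ v, c2 v v := fun v => .refl
  have hc2symm : ∀ v w, c2 v w → c2 w v := fun v w h => rtg_symm stepU_symm h
  have hc2trans : ∀ u v w, c2 u v → c2 v w → c2 u w := fun u v w h1 h2 => h1.trans h2
  set rep : V → ℕ := fun v => sInf (ι '' {w | w ∈ F ∧ c2 v w}) with hrep
  have hmem' : ∀ v ∈ F, ∃ z, (z ∈ F ∧ c2 v z) ∧ ι z = rep v := by
    intro v hv
    have hne : (ι '' {w | w ∈ F ∧ c2 v w}).Nonempty := ⟨ι v, v, ⟨hv, hc2refl v⟩, rfl⟩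
    have := Nat.sInf_mem hne
    obtain ⟨z, hz, hze⟩ := this
    exact ⟨z, hz, hze⟩
  have hkey1 : ∀ v ∈ F, ∀ w ∈ F, c2 v w → rep v = rep w := by
    intro v hv w hw hvw
    have hset : {z | z ∈ F ∧ c2 v z} = {z | z ∈ F ∧ c2 w z} := by
      ext z
      exact ⟨fun h => ⟨h.1, hc2trans _ _ _ (hc2symm _ _ hvw) h.2⟩,
        fun h => ⟨h.1, hc2trans _ _ _ hvw h.2⟩⟩
    simp only [hrep]
    rw [hset]
  have hkey2 : ∀ v ∈ F, ∀ w ∈ F, rep v = rep w → c2 v w := by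
    intro v hv w hw hvw
    obtain ⟨z1, hz1, hz1e⟩ := hmem' v hv
    obtain ⟨z2, hz2, hz2e⟩ := hmem' w hw
    have : z1 = z2 := hι (by rw [hz1e, hz2e, hvw])
    subst this
    exact hc2trans _ _ _ hz1.2 (hc2symm _ _ hz2.2)
  by_cases h7 : 7 ≤ (F.image rep).card
  · obtain ⟨t, htsub, htc⟩ := Finset.exists_subset_card_eq h7
    have hchoice : ∀ m ∈ t, ∃ v ∈ F, rep v = m := by
      intro m hm
      exact Finset.mem_image.mp (htsub hm)
    choose g hgF hgrep using hchoice
    set gg : {m // m ∈ t} → V := fun m => g m.1 m.2 with hgg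
    set r7 : Finset V := t.attach.image gg with hr7
    have hr7card : r7.card = 7 := by
      rw [hr7, Finset.card_image_of_injOn, Finset.card_attach, htc]
      intro m1 _ m2 _ heq
      have h' : rep (gg m1) = rep (gg m2) := congrArg rep heq
      rw [hgg] at h'
      simp only at h'
      rw [hgrep m1.1 m1.2, hgrep m2.1 m2.2] at h'
      exact Subtype.ext h'
    refine no_seven hUq hE r7 hr7card ?_ ?_
    · intro v hv
      obtain ⟨m, -, rfl⟩ := Finset.mem_image.mp hv
      exact (hF _ (hgF m.1 m.2)).2
    · intro v hv w hw hvw hconn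
      obtain ⟨m1, -, rfl⟩ := Finset.mem_image.mp hv
      obtain ⟨m2, -, rfl⟩ := Finset.mem_image.mp hw
      have h' := hkey1 _ (hgF m1.1 m1.2) _ (hgF m2.1 m2.2) hconn
      rw [hgrep m1.1 m1.2, hgrep m2.1 m2.2] at h'
      exact hvw (congrArg gg (Subtype.ext h'))
  · push_neg at h7
    have hmaps : ∀ v ∈ F, rep v ∈ F.image rep := fun v hv => Finset.mem_image_of_mem rep hv
    have hlt2 : (F.image rep).card * 2 < F.card := by omega
    obtain ⟨m, -, hfib⟩ := Finset.exists_lt_card_fiber_of_mul_lt_card_of_maps_to hmaps hlt2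
    obtain ⟨t3, ht3sub, ht3c⟩ := Finset.exists_subset_card_eq
      (s := F.filter (fun v => rep v = m)) (n := 3) (by omega)
    obtain ⟨v1, v2, v3, d12, d13, d23, rfl⟩ := Finset.card_eq_three.mp ht3c
    have hmemf : ∀ v ∈ ({v1, v2, v3} : Finset V), v ∈ F ∧ rep v = m := by
      intro v hv
      have := ht3sub hv
      rw [Finset.mem_filter] at this
      exact this
    have hm1 := hmemf v1 (Finset.mem_insert_self v1 {v2, v3})
    have hm2 := hmemf v2 (Finset.mem_insert_of_mem (Finset.mem_insert_self v2 {v3}))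
    have hm3 := hmemf v3 (Finset.mem_insert_of_mem (Finset.mem_insert_of_mem (Finset.mem_singleton_self v3)))
    have hc12 : c2 v1 v2 := hkey2 _ hm1.1 _ hm2.1 (by rw [hm1.2, hm2.2])
    have hc13 : c2 v1 v3 := hkey2 _ hm1.1 _ hm3.1 (by rw [hm1.2, hm3.2])
    obtain ⟨w1, hw1⟩ := (hF v1 hm1.1).1
    obtain ⟨w2, hw2⟩ := (hF v2 hm2.1).1
    obtain ⟨w3, hw3⟩ := (hF v3 hm3.1).1
    have hdiste : ∀ (va vb : V) (wa wb : V), va ≠ vb → c2 v1 va → c2 v1 vb →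
        s(va, wa) ∈ Uset n → s(va, wa) ≠ s(vb, wb) := by
      intro va vb wa wb hab hca hcb hUa heq
      rcases Sym2.eq_iff.mp heq with ⟨h1, -⟩ | ⟨h1, h2⟩
      · exact hab h1
      · exact both_endpoints hUa (by rw [h2]) ((hc2symm _ _ hca).trans hcb)
    exact no_three_adjacent' hUq hE rfl rfl rfl hw1 hw2 hw3 .refl hc12 hc13
      (hdiste v1 v2 w1 w2 d12 (hc2refl v1) hc12 hw1)
      (hdiste v1 v3 w1 w3 d13 (hc2refl v1) hc13 hw1)
      (hdiste v2 v3 w2 w3 d23 hc12 hc13 hw2)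

lemma rtg_stepP_to_stepU {n : Sym2 V → ℕ} (hz : ∀ v, ¬ zetaP v n) {x : V}
    (hinf : {z | ReflTransGen (stepU n) x z}.Infinite) :
    ∀ z, ReflTransGen (stepP n) x z → ReflTransGen (stepU n) x z := by
  intro z h
  induction h with
  | refl => exact .refl
  | tail hprev hstep ih =>
    rename_i z' z
    by_cases hUe : s(z', z) ∈ Uset n
    · exfalso
      refine hz z' ⟨⟨z, hUe⟩, ?_⟩
      rwa [reachU_congr ih]
    · exact ih.tail ⟨hstep, hUe⟩

lemma comp_finite {n : Sym2 V → ℕ} (hUq : uniqueInfCluster n)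
    (hA : ∃ a b : V, eventA a b n) (hz : ∀ v, ¬ zetaP v n) (x : V) :
    {z | ReflTransGen (stepU n) x z}.Finite := by
  by_contra hinf
  replace hinf : {z | ReflTransGen (stepU n) x z}.Infinite := hinf
  obtain ⟨a, b, hab⟩ := hA
  have he : s(a, b) ∈ Uset n := ⟨a, b, rfl, hab⟩
  have hnotboth : ¬ (ReflTransGen (stepU n) x a ∧ ReflTransGen (stepU n) x b) := by
    rintro ⟨h1, h2⟩
    exact both_endpoints he rfl ((rtg_symm stepU_symm h1).trans h2)
  have hx : inInf n x := by
    rw [inInf, cluster_eq_rtg]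
    exact hinf.mono (fun z hz' => rtgMono (fun u v h => h.1) hz')
  have hc : ∀ c, c = a ∨ c = b → ¬ ReflTransGen (stepU n) x c → False := by
    intro c hcab hnc
    have hic : inInf n c := by
      rcases hcab with rfl | rfl
      · exact inInf_mono_drop (uset_inInf he rfl)
      · exact inInf_mono_drop (uset_inInf he Sym2.eq_swap)
    have hconn := hUq x c hx hic
    rw [conn_iff_rtg] at hconn
    exact hnc (rtg_stepP_to_stepU hz hinf c hconn)
  by_cases hca : ReflTransGen (stepU n) x a
  · exact hc b (Or.inr rfl) (fun h => hnotboth ⟨hca, h⟩)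
  · exact hc a (Or.inl rfl) hca

lemma wcount_cons_le {l : List V} {a b : V} (e : Sym2 V) :
    wcount (b :: l) e ≤ wcount (a :: b :: l) e := by
  rw [wcount]
  omega

lemma wcount_not_mem {a : V} : ∀ (l : List V) (b : V), a ∉ l → wcount l s(a, b) = 0 := by
  intro l
  induction l with
  | nil => intro b _; rfl
  | cons c t ih =>
    intro b ha
    cases t with
    | nil => rfl
    | cons d t' =>
      rw [wcount]
      have h0 : wcount (d :: t') s(a, b) = 0 := ih b (fun h => ha (List.mem_cons_of_mem c h))
      have hne : s(c, d) ≠ s(a, b) := by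
        intro h
        rcases Sym2.eq_iff.mp h with ⟨h1, -⟩ | ⟨-, h2⟩
        · subst h1; exact ha (List.mem_cons_self)
        · subst h2; exact ha (List.mem_cons_of_mem _ (List.mem_cons_self))
      rw [if_neg hne, h0]

lemma wcount_nodup {e : Sym2 V} : ∀ {l : List V}, l.Nodup → wcount l e ≤ 1 := by
  intro l
  induction l with
  | nil => intro _; exact Nat.zero_le 1
  | cons a t ih =>
    intro hnd
    cases t with
    | nil => exact Nat.zero_le 1
    | cons b t' =>
      rw [wcount]
      by_cases he : s(a, b) = e
      · subst he
        have : wcount (b :: t') s(a, b) = 0 :=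
          wcount_not_mem (b :: t') b (List.nodup_cons.mp hnd).1
        rw [if_pos rfl, this]
      · rw [if_neg he]
        simpa using ih (List.nodup_cons.mp hnd).2

lemma chain_of_wcount {R : Sym2 V → Prop} :
    ∀ l : List V, (∀ e, 1 ≤ wcount l e → R e) → l.Chain' (fun u v => R s(u, v))
  | [], _ => List.isChain_nil
  | [a], _ => List.isChain_singleton a
  | a :: b :: t, h => by
    simp only [List.Chain', List.isChain_cons_cons]
    constructor
    · refine h s(a, b) ?_
      rw [wcount, if_pos rfl]
      omega
    · refine chain_of_wcount (b :: t) ?_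
      intro e he
      exact h e (le_trans he (wcount_cons_le e))

lemma avoid_rtg {n : Sym2 V → ℕ} {e : Sym2 V} :
    ∀ (l : List V) {x y : V}, l.Chain' (stepP n) → wcount l e = 0 →
      l.head? = some x → l.getLast? = some y → ReflTransGen (stepP (dropE n e)) x y := by
  intro l
  induction l with
  | nil => intro x y _ _ hh _; simp at hh
  | cons a t ih =>
    intro x y hc hw hh hl
    cases t with
    | nil =>
      simp only [List.head?_cons, Option.some.injEq] at hh
      simp only [List.getLast?_singleton, Option.some.injEq] at hl
      subst hh; subst hl; exact .refl
    | cons b t' =>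
      simp only [List.head?_cons, Option.some.injEq] at hh
      subst hh
      rw [List.getLast?_cons_cons] at hl
      simp only [List.Chain', List.isChain_cons_cons] at hc
      rw [wcount] at hw
      have hne : s(a, b) ≠ e := by
        intro h
        rw [if_pos h] at hw
        omega
      have hw0 : wcount (b :: t') e = 0 := by
        rw [if_neg hne] at hw
        omega
      refine ReflTransGen.head ?_ (ih hc.2 hw0 rfl hl)
      show 0 < dropE n e s(a, b)
      rw [dropE, if_neg hne]
      exact hc.1

lemma split_one {n : Sym2 V → ℕ} {e : Sym2 V} :
    ∀ (l : List V) {x y : V}, l.Chain' (stepP n) → wcount l e = 1 →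
      l.head? = some x → l.getLast? = some y →
      ∃ c d, s(c, d) = e ∧ ReflTransGen (stepP (dropE n e)) x c ∧
        ReflTransGen (stepP (dropE n e)) d y := by
  intro l
  induction l with
  | nil => intro x y _ _ hh _; simp at hh
  | cons a t ih =>
    intro x y hc hw hh hl
    cases t with
    | nil =>
      rw [show wcount [a] e = 0 from rfl] at hw
      omega
    | cons b t' =>
      simp only [List.head?_cons, Option.some.injEq] at hh
      subst hh
      rw [List.getLast?_cons_cons] at hl
      simp only [List.Chain', List.isChain_cons_cons] at hc
      rw [wcount] at hw
      by_cases he : s(a, b) = e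
      · rw [if_pos he] at hw
        have hw0 : wcount (b :: t') e = 0 := by omega
        exact ⟨a, b, he, .refl, avoid_rtg (b :: t') hc.2 hw0 rfl hl⟩
      · rw [if_neg he] at hw
        rw [Nat.zero_add] at hw
        obtain ⟨c, d, hcd, hxc, hdy⟩ := ih hc.2 hw rfl hl
        refine ⟨c, d, hcd, ReflTransGen.head ?_ hxc, hdy⟩
        show 0 < dropE n e s(a, b)
        rw [dropE, if_neg he]
        exact hc.1

lemma kpaths_avoid {n : Sym2 V → ℕ} (x y : V) (h2 : kPaths n x y 2) :
    ReflTransGen (stepU n) x y := by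
  obtain ⟨w, hprop, hcap⟩ := h2
  have cap : ∀ (j : Fin 2) e, wcount (w j) e ≤ n e := by
    intro j e
    refine le_trans ?_ (hcap e)
    exact Finset.single_le_sum (f := fun i => wcount (w i) e) (fun i _ => Nat.zero_le _) (Finset.mem_univ j)
  have cap2 : ∀ e, wcount (w 0) e + wcount (w 1) e ≤ n e := by
    intro e
    have := hcap e
    rwa [Fin.sum_univ_two] at this
  have havoid : ∀ e, e ∈ Uset n → wcount (w 0) e = 0 := by
    intro e he
    by_contra h0
    have h1le : 1 ≤ wcount (w 0) e := Nat.one_le_iff_ne_zero.mpr h0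
    have hone := uset_one he
    have hwc1 : wcount (w 0) e = 1 :=
      le_antisymm (wcount_nodup (hprop 0).2.2) h1le
    have hwc10 : wcount (w 1) e = 0 := by
      have := cap2 e
      omega
    have hch0 : (w 0).Chain' (stepP n) :=
      chain_of_wcount (R := fun e => 0 < n e) (w 0)
        (fun e' he' => lt_of_lt_of_le (by omega) (cap 0 e'))
    have hch1 : (w 1).Chain' (stepP n) :=
      chain_of_wcount (R := fun e => 0 < n e) (w 1)
        (fun e' he' => lt_of_lt_of_le (by omega) (cap 1 e'))
    have hconn1 : ReflTransGen (stepP (dropE n e)) x y :=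
      avoid_rtg (w 1) hch1 hwc10 (hprop 1).1 (hprop 1).2.1
    obtain ⟨c, d, hcd, hxc, hdy⟩ := split_one (w 0) hch0 hwc1 (hprop 0).1 (hprop 0).2.1
    exact uset_nconn he hcd.symm
      ((rtg_symm stepP_symm hxc).trans (hconn1.trans (rtg_symm stepP_symm hdy)))
  have hch : (w 0).Chain' (stepU n) := by
    refine chain_of_wcount (R := fun e => 0 < n e ∧ e ∉ Uset n) (w 0) ?_
    intro e he
    refine ⟨lt_of_lt_of_le (by omega) (cap 0 e), ?_⟩
    intro hUe
    rw [havoid e hUe] at he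
    omega
  exact (exists_list_iff_rtg (stepU n) x y).mp ⟨w 0, (hprop 0).1, (hprop 0).2.1, hch⟩

lemma useE_eq_one {p : ℕ → V} {e : Sym2 V} (h : ∃ i, s(p i, p (i + 1)) = e) :
    useE p e = 1 := by
  rw [useE, if_pos h]

lemma useE_eq_zero {p : ℕ → V} {e : Sym2 V} (h : useE p e = 0) :
    ∀ i, s(p i, p (i + 1)) ≠ e := by
  intro i hi
  rw [useE, if_pos ⟨i, hi⟩] at h
  omega

lemma traverse_unique {p : ℕ → V} (hp : Function.Injective p) {c d : V} {i i' : ℕ}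
    (h : s(p i, p (i + 1)) = s(c, d)) (h' : s(p i', p (i' + 1)) = s(c, d)) : i = i' := by
  by_contra hne
  rcases Sym2.eq_iff.mp h with ⟨h1, h2⟩ | ⟨h1, h2⟩ <;>
    rcases Sym2.eq_iff.mp h' with ⟨h1', h2'⟩ | ⟨h1', h2'⟩
  · exact hne (hp (h1.trans h1'.symm))
  · have e1 : i = i' + 1 := hp (h1.trans h2'.symm)
    have e2 : i + 1 = i' := hp (h2.trans h1'.symm)
    omega
  · have e1 : i = i' + 1 := hp (h1.trans h2'.symm)
    have e2 : i + 1 = i' := hp (h2.trans h1'.symm)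
    omega
  · exact hne (hp (h1.trans h1'.symm))

lemma ray_rtg {r : V → V → Prop} {p : ℕ → V} {m₀ : ℕ}
    (hstep : ∀ m, m₀ ≤ m → r (p m) (p (m + 1))) :
    ∀ m, m₀ ≤ m → ReflTransGen r (p m₀) (p m) := by
  intro m
  induction m with
  | zero =>
    intro h
    have : m₀ = 0 := Nat.le_zero.mp h
    rw [this]
  | succ k ih =>
    intro h
    rcases Nat.lt_or_ge m₀ (k + 1) with hlt | hge
    · have hk : m₀ ≤ k := by omega
      exact (ih hk).tail (hstep k hk)
    · have : m₀ = k + 1 := by omega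
      rw [this]

lemma no_three_rays {n : Sym2 V → ℕ} (hUq : uniqueInfCluster n)
    (hE : ∀ x, inInf n x → atMostEnds n x 2)
    (hA : ∃ a b : V, eventA a b n) (hz : ∀ v, ¬ zetaP v n) (x : V) :
    ¬ kInfPaths n x 3 := by
  classical
  rintro ⟨p, hp, hcap⟩
  have hinj : ∀ j, Function.Injective (p j) := fun j => (hp j).1
  have hp0 : ∀ j, p j 0 = x := fun j => (hp j).2
  have hppos : ∀ (j : Fin 3) i, 0 < n s(p j i, p j (i + 1)) := by
    intro j i
    have h1 : useE (p j) s(p j i, p j (i + 1)) = 1 := useE_eq_one ⟨i, rfl⟩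
    have h2 : useE (p j) s(p j i, p j (i + 1)) ≤
        ∑ k : Fin 3, useE (p k) s(p j i, p j (i + 1)) :=
      Finset.single_le_sum (f := fun k => useE (p k) s(p j i, p j (i + 1)))
        (fun k _ => Nat.zero_le _) (Finset.mem_univ j)
    have h3 := hcap s(p j i, p j (i + 1))
    omega
  have hK := comp_finite hUq hA hz x
  have hex : ∀ j : Fin 3, ∃ m, ¬ ReflTransGen (stepU n) x (p j m) := by
    intro j
    by_contra hall
    push_neg at hall
    exact Set.infinite_range_of_injective (hinj j)
      (hK.subset (fun z ⟨m, hm⟩ => hm ▸ hall m))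
  set M : Fin 3 → ℕ := fun j => Nat.find (hex j) with hM
  have hvx : ∀ j, ¬ ReflTransGen (stepU n) x (p j (M j)) := fun j => Nat.find_spec (hex j)
  have hM0 : ∀ j, M j ≠ 0 := by
    intro j h
    exact hvx j (by rw [h, hp0 j])
  have hu : ∀ j, ReflTransGen (stepU n) x (p j (M j - 1)) := by
    intro j
    have := Nat.find_min (hex j) (m := M j - 1) (by show M j - 1 < M j; have := hM0 j; omega)
    rwa [not_not] at this
  set u : Fin 3 → V := fun j => p j (M j - 1) with hud
  set v : Fin 3 → V := fun j => p j (M j) with hvd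
  set f : Fin 3 → Sym2 V := fun j => s(u j, v j) with hfd
  have hMsucc : ∀ j, (M j - 1) + 1 = M j := by
    intro j; have := hM0 j; omega
  have hfe : ∀ j, s(p j (M j - 1), p j ((M j - 1) + 1)) = f j := by
    intro j
    rw [hfd]
    simp only [hud, hvd, hMsucc j]
  have hfU : ∀ j, f j ∈ Uset n := by
    intro j
    by_contra hni
    refine hvx j ?_
    have hstep : stepU n (u j) (v j) := by
      refine ⟨?_, hni⟩
      have := hppos j (M j - 1)
      rwa [hMsucc j] at this
    exact (hu j).tail hstep
  have hone : ∀ j, n (f j) = 1 := fun j => uset_one (hfU j)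
  have huse : ∀ j, useE (p j) (f j) = 1 := fun j => useE_eq_one ⟨M j - 1, hfe j⟩
  have hother : ∀ j k, j ≠ k → ∀ i, s(p k i, p k (i + 1)) ≠ f j := by
    intro j k hjk
    refine useE_eq_zero ?_
    have hsum := hcap (f j)
    have hpairle : useE (p j) (f j) + useE (p k) (f j) ≤ ∑ i : Fin 3, useE (p i) (f j) := by
      calc useE (p j) (f j) + useE (p k) (f j)
          = ∑ i ∈ ({j, k} : Finset (Fin 3)), useE (p i) (f j) :=
            (Finset.sum_pair (f := fun i => useE (p i) (f j)) hjk).symm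
        _ ≤ ∑ i : Fin 3, useE (p i) (f j) :=
            Finset.sum_le_sum_of_subset (Finset.subset_univ _)
    have h1 := huse j
    have h2 := hone j
    omega
  have hselft : ∀ j i, s(p j i, p j (i + 1)) = f j → i = M j - 1 := by
    intro j i hi
    have := hfe j
    rw [hfd] at hi this
    exact traverse_unique (hinj j) hi this
  have hdistf : ∀ j k, j ≠ k → f j ≠ f k := by
    intro j k hjk heq
    exact hother j k hjk (M k - 1) (by rw [hfe k, heq])
  set A : Fin 3 → Set V := fun j => {z | ReflTransGen (stepP (dropE n (f j))) x z} with hAd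
  set B : Fin 3 → Set V := fun j => {z | ReflTransGen (stepP (dropE n (f j))) (v j) z} with hBd
  have hxA : ∀ j z, ReflTransGen (stepU n) x z → z ∈ A j :=
    fun j z h => rtgMono (fun _ _ hs => stepU_to_drop (hfU j) hs) h
  have hsideAB : ∀ j z, z ∈ A j → z ∈ B j → False := by
    intro j z hzA hzB
    refine uset_nconn (hfU j) rfl ?_
    have huA : u j ∈ A j := hxA j (u j) (hu j)
    exact (rtg_symm stepP_symm huA).trans (hzA.trans (rtg_symm stepP_symm hzB))
  have hrayA : ∀ j k, j ≠ k → ∀ m, p k m ∈ A j := by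
    intro j k hjk m
    have h0 : ReflTransGen (stepP (dropE n (f j))) (p k 0) (p k m) := by
      refine ray_rtg (m₀ := 0) ?_ m (Nat.zero_le m)
      intro i _
      show 0 < dropE n (f j) s(p k i, p k (i + 1))
      rw [dropE, if_neg (hother j k hjk i)]
      exact hppos k i
    rwa [hp0 k] at h0
  have hvB : ∀ j m, M j ≤ m → p j m ∈ B j := by
    intro j m hm
    have h0 : ReflTransGen (stepP (dropE n (f j))) (p j (M j)) (p j m) := by
      refine ray_rtg (m₀ := M j) ?_ m hm
      intro i hi
      show 0 < dropE n (f j) s(p j i, p j (i + 1))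
      rw [dropE, if_neg ?_]
      · exact hppos j i
      · intro hif
        have := hselft j i hif
        have := hM0 j
        omega
    exact h0
  have hvA : ∀ j k, j ≠ k → v j ∈ A k := by
    intro j k hjk
    exact hrayA k j (fun h => hjk h.symm) (M j)
  have hBA : ∀ j k, j ≠ k → B j ⊆ A k := by
    intro j k hjk z hz
    simp only [hBd, Set.mem_setOf_eq] at hz
    induction hz with
    | refl => exact hvA j k hjk
    | tail hprev hstep ih =>
      rename_i z' z
      by_cases hik : s(z', z) = f k
      · exfalso
        rw [hfd] at hik
        rcases Sym2.eq_iff.mp hik with ⟨h1, h2⟩ | ⟨h1, h2⟩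
        · -- z' = u k : u k ∈ A j, z' ∈ B j : contradiction
          refine hsideAB j z' ?_ hprev
          rw [h1]
          exact hxA j (u k) (hu k)
        · refine hsideAB k z' ih ?_
          rw [h1]
          exact Relation.ReflTransGen.refl
      · refine ReflTransGen.tail ih ?_
        show 0 < dropE n (f k) s(z', z)
        rw [dropE, if_neg hik]
        exact stepP_drop_le hstep
  have hfin3 : ∀ j : Fin 3, ∃ m₀, M j ≤ m₀ ∧ ∀ m, m₀ ≤ m →
      p j m ∉ ({u 0, u 1, u 2} : Set V) := by
    intro j
    have hfin : {m | p j m ∈ ({u 0, u 1, u 2} : Set V)}.Finite := by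
      refine Set.Finite.preimage (Set.injOn_of_injective (hinj j)) ?_
      exact (Set.finite_singleton (u 2)).insert (u 1) |>.insert (u 0)
    obtain ⟨N, hN⟩ := hfin.bddAbove
    refine ⟨max (M j) (N + 1), le_max_left _ _, ?_⟩
    intro m hm hmem
    have := hN hmem
    simp only [ge_iff_le, max_le_iff] at hm
    omega
  choose mm hmmM hmmS using hfin3
  set y : Fin 3 → V := fun j => p j (mm j) with hyd
  have hyB : ∀ j, y j ∈ B j := fun j => hvB j (mm j) (hmmM j)
  have hySc : ∀ j m, mm j ≤ m → p j m ∉ ({u 0, u 1, u 2} : Set V) := hmmS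
  have hcoeS : (({u 0, u 1, u 2} : Finset V) : Set V) = ({u 0, u 1, u 2} : Set V) := by
    simp
  refine ends3 hUq hE y ({u 0, u 1, u 2} : Finset V) ?_ ?_ ?_ ?_ ?_
  · intro j
    rw [inInf, cluster_eq_rtg]
    refine Set.infinite_of_injective_forall_mem
      (f := fun k : ℕ => p j (mm j + k)) ?_ ?_
    · intro k1 k2 hk
      have := hinj j hk
      omega
    · intro k
      refine ray_rtg (m₀ := mm j) ?_ (mm j + k) (Nat.le_add_right _ _)
      intro i _
      exact hppos j i
  · intro j hj
    refine hySc j (mm j) (le_refl _) ?_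
    rw [← hcoeS]
    exact_mod_cast hj
  · intro j
    refine Set.infinite_of_injective_forall_mem
      (f := fun k : ℕ => p j (mm j + k)) ?_ ?_
    · intro k1 k2 hk
      have := hinj j hk
      omega
    · intro k
      show connOn n _ (y j) (p j (mm j + k))
      set r' : V → V → Prop := fun a b =>
        ∃ m, mm j ≤ m ∧ a = p j m ∧ b = p j (m + 1) with hr'd
      have hr'rtg : ∀ m, mm j ≤ m → ReflTransGen r' (p j (mm j)) (p j m) := by
        refine ray_rtg ?_
        intro m hm
        exact ⟨m, hm, rfl, rfl⟩
      have hr'reach : ∀ w, ReflTransGen r' (y j) w → ∃ m, mm j ≤ m ∧ w = p j m := by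
        intro w hw
        induction hw with
        | refl => exact ⟨mm j, le_refl _, rfl⟩
        | tail hprev hstep ih =>
          obtain ⟨m, hm, ha, hb⟩ := hstep
          exact ⟨m + 1, by omega, hb⟩
      refine connOn_of_rtg ?_ ?_ (hr'rtg (mm j + k) (Nat.le_add_right _ _))
      · rintro a b ⟨m, hm, rfl, rfl⟩
        exact hppos j m
      · intro w hw
        obtain ⟨m, hm, rfl⟩ := hr'reach w hw
        rw [Set.mem_compl_iff, hcoeS]
        exact hySc j m hm
  · intro j k hjk hcon
    have hykB : y k ∈ B j := by
      refine connOn_closed (hyB j) ?_ hcon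
      intro a b ha hb
      by_cases hik : s(a, b) = f j
      · rw [hfd] at hik
        rcases Sym2.eq_iff.mp hik with ⟨h1, h2⟩ | ⟨h1, h2⟩
        · exfalso
          refine hsideAB j a ?_ ha
          rw [h1]
          exact hxA j (u j) (hu j)
        · left
          rw [Set.mem_compl_iff, not_not, hcoeS, h2]
          fin_cases j <;> simp
      · right
        refine ReflTransGen.tail ha ?_
        show 0 < dropE n (f j) s(a, b)
        rw [dropE, if_neg hik]
        exact hb
    exact hsideAB j (y k) (hBA k j (fun h => hjk h.symm) (hyB k)) hykB
  · intro j k hjy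
    by_contra hjk
    have h1 : y k ∈ A j := hBA k j (fun h => hjk h.symm) (hyB k)
    rw [← hjy] at h1
    exact hsideAB j (y j) h1 (hyB j)

lemma infinite_iff_finset {α : Type*} (S : Set α) :
    S.Infinite ↔ ∀ F : Finset α, ∃ a ∈ S, a ∉ F := by
  constructor
  · exact fun h F => h.exists_notMem_finset F
  · intro h
    by_contra hfin
    rw [Set.not_infinite] at hfin
    obtain ⟨a, ha, hna⟩ := h hfin.toFinset
    exact hna (hfin.mem_toFinset.mpr ha)

section Meas

variable [Countable V]

lemma measurableSet_chainQ (Q : Sym2 V → Set (Sym2 V → ℕ)) (hQ : ∀ e, MeasurableSet (Q e)) :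
    ∀ l : List V, MeasurableSet {n : Sym2 V → ℕ | l.Chain' (fun u v => n ∈ Q s(u, v))}
  | [] => by
      have : {n : Sym2 V → ℕ | List.Chain' (fun u v => n ∈ Q s(u, v)) []} = Set.univ := by
        ext n; simp [List.Chain']
      rw [this]; exact MeasurableSet.univ
  | [a] => by
      have : {n : Sym2 V → ℕ | List.Chain' (fun u v => n ∈ Q s(u, v)) [a]} = Set.univ := by
        ext n; simp [List.Chain']
      rw [this]; exact MeasurableSet.univ
  | a :: b :: t => by
      have heq : {n : Sym2 V → ℕ | (a :: b :: t).Chain' (fun u v => n ∈ Q s(u, v))}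
          = Q s(a, b) ∩ {n | (b :: t).Chain' (fun u v => n ∈ Q s(u, v))} := by
        ext n
        simp only [Set.mem_setOf_eq, Set.mem_inter_iff, List.Chain', List.isChain_cons_cons]
      rw [heq]
      exact (hQ _).inter (measurableSet_chainQ Q hQ (b :: t))

lemma measurableSet_rtgQ (Q : Sym2 V → Set (Sym2 V → ℕ)) (hQ : ∀ e, MeasurableSet (Q e))
    (x y : V) :
    MeasurableSet {n : Sym2 V → ℕ | ReflTransGen (fun u v => n ∈ Q s(u, v)) x y} := by
  have heq : {n : Sym2 V → ℕ | ReflTransGen (fun u v => n ∈ Q s(u, v)) x y}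
      = ⋃ l : List V, {n | l.head? = some x ∧ l.getLast? = some y ∧
          l.Chain' (fun u v => n ∈ Q s(u, v))} := by
    ext n
    simp only [Set.mem_setOf_eq, Set.mem_iUnion]
    rw [← exists_list_iff_rtg]
  rw [heq]
  refine MeasurableSet.iUnion fun l => ?_
  rcases Classical.em (l.head? = some x ∧ l.getLast? = some y) with h | h
  · have heq2 : {n : Sym2 V → ℕ | l.head? = some x ∧ l.getLast? = some y ∧
        l.Chain' (fun u v => n ∈ Q s(u, v))}
        = {n | l.Chain' (fun u v => n ∈ Q s(u, v))} := by
      ext n; simp [h.1, h.2]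
    rw [heq2]
    exact measurableSet_chainQ Q hQ l
  · have heq2 : {n : Sym2 V → ℕ | l.head? = some x ∧ l.getLast? = some y ∧
        l.Chain' (fun u v => n ∈ Q s(u, v))} = ∅ := by
      ext n
      simp only [Set.mem_setOf_eq, Set.mem_empty_iff_false, iff_false]
      intro hc
      exact h ⟨hc.1, hc.2.1⟩
    rw [heq2]
    exact MeasurableSet.empty

lemma measQ_pos (e : Sym2 V) : MeasurableSet {n : Sym2 V → ℕ | 0 < n e} :=
  measurableSet_lt measurable_const (measurable_pi_apply e)

lemma measurableSet_connP (x y : V) :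
    MeasurableSet {n : Sym2 V → ℕ | ReflTransGen (stepP n) x y} :=
  measurableSet_rtgQ (fun e => {n | 0 < n e}) measQ_pos x y

lemma measurable_dropE (e : Sym2 V) :
    Measurable (fun n : Sym2 V → ℕ => dropE n e) := by
  refine measurable_pi_lambda _ (fun e' => ?_)
  by_cases h : e' = e
  · have : (fun n : Sym2 V → ℕ => dropE n e e') = fun _ => 0 := by
      funext n; rw [dropE, if_pos h]
    rw [this]; exact measurable_const
  · have : (fun n : Sym2 V → ℕ => dropE n e e') = fun n => n e' := by
      funext n; rw [dropE, if_neg h]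
    rw [this]; exact measurable_pi_apply e'

lemma measurableSet_infinite_reach (A : V → Set (Sym2 V → ℕ)) (hA : ∀ z, MeasurableSet (A z)) :
    MeasurableSet {n : Sym2 V → ℕ | {z | n ∈ A z}.Infinite} := by
  have heq : {n : Sym2 V → ℕ | {z | n ∈ A z}.Infinite}
      = ⋂ F : Finset V, ⋃ z : V, ⋃ _ : z ∉ F, A z := by
    ext n
    simp only [Set.mem_setOf_eq, Set.mem_iInter, Set.mem_iUnion]
    rw [infinite_iff_finset]
    constructor
    · intro h F
      obtain ⟨a, ha, hna⟩ := h F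
      exact ⟨a, hna, ha⟩
    · intro h F
      obtain ⟨a, hna, ha⟩ := h F
      exact ⟨a, ha, hna⟩
  rw [heq]
  exact MeasurableSet.iInter fun F => MeasurableSet.iUnion fun z =>
    MeasurableSet.iUnion fun _ => hA z

lemma measurableSet_inInf (x : V) : MeasurableSet {m : Sym2 V → ℕ | inInf m x} := by
  have heq : {m : Sym2 V → ℕ | inInf m x}
      = {m : Sym2 V → ℕ | {z | m ∈ {m' | ReflTransGen (stepP m') x z}}.Infinite} := by
    ext m
    rw [Set.mem_setOf_eq, inInf, cluster_eq_rtg]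
    rfl
  rw [heq]
  exact measurableSet_infinite_reach _ (fun z => measurableSet_connP x z)

lemma measurableSet_eventA (a b : V) :
    MeasurableSet {n : Sym2 V → ℕ | eventA a b n} := by
  have heq : {n : Sym2 V → ℕ | eventA a b n} =
      ({n : Sym2 V → ℕ | n s(a, b) = 1}
        ∩ ((fun n : Sym2 V → ℕ => dropE n s(a, b)) ⁻¹' {m | inInf m a})
        ∩ ((fun n : Sym2 V → ℕ => dropE n s(a, b)) ⁻¹' {m | inInf m b}))
        ∩ ((fun n : Sym2 V → ℕ => dropE n s(a, b)) ⁻¹'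
            {m | ReflTransGen (stepP m) a b})ᶜ := by
    ext n
    simp only [eventA, Set.mem_inter_iff, Set.mem_setOf_eq, Set.mem_preimage,
      Set.mem_compl_iff]
    rw [conn_iff_rtg]
    tauto
  rw [heq]
  have h1 : MeasurableSet {n : Sym2 V → ℕ | n s(a, b) = 1} :=
    (measurable_pi_apply s(a, b)) (measurableSet_singleton 1)
  exact ((h1.inter ((measurable_dropE s(a, b)) (measurableSet_inInf a))).inter
    ((measurable_dropE s(a, b)) (measurableSet_inInf b))).inter
    (((measurable_dropE s(a, b)) (measurableSet_connP a b)).compl)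

lemma measurableSet_usetMem (e : Sym2 V) :
    MeasurableSet {n : Sym2 V → ℕ | e ∈ Uset n} := by
  have heq : {n : Sym2 V → ℕ | e ∈ Uset n}
      = ⋃ (a : V) (b : V), ⋃ _ : e = s(a, b), {n | eventA a b n} := by
    ext n
    simp only [Set.mem_setOf_eq, Set.mem_iUnion]
    exact ⟨fun ⟨a, b, h1, h2⟩ => ⟨a, b, h1, h2⟩, fun ⟨a, b, h1, h2⟩ => ⟨a, b, h1, h2⟩⟩
  rw [heq]
  exact MeasurableSet.iUnion fun a => MeasurableSet.iUnion fun b =>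
    MeasurableSet.iUnion fun _ => measurableSet_eventA a b

lemma measurableSet_connW (x y : V) :
    MeasurableSet {n : Sym2 V → ℕ | ReflTransGen (stepU n) x y} :=
  measurableSet_rtgQ (fun e => {n | 0 < n e} ∩ {n | e ∈ Uset n}ᶜ)
    (fun e => (measQ_pos e).inter (measurableSet_usetMem e).compl) x y

lemma measurableSet_zeta (v : V) : MeasurableSet {n : Sym2 V → ℕ | zetaP v n} := by
  have heq : {n : Sym2 V → ℕ | zetaP v n}
      = (⋃ w : V, {n | s(v, w) ∈ Uset n})
        ∩ {n : Sym2 V → ℕ | {z | n ∈ {m | ReflTransGen (stepU m) v z}}.Infinite} := by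
    ext n
    simp only [zetaP, Set.mem_inter_iff, Set.mem_iUnion, Set.mem_setOf_eq]
  rw [heq]
  exact (MeasurableSet.iUnion fun w => measurableSet_usetMem s(v, w)).inter
    (measurableSet_infinite_reach _ (fun z => measurableSet_connW v z))

lemma measurable_curShift (φ : Equiv.Perm V) :
    Measurable (curShift φ : (Sym2 V → ℕ) → Sym2 V → ℕ) :=
  measurable_pi_lambda _ (fun e => measurable_pi_apply (Sym2.map φ e))

end Meas

lemma curShift_pair (φ : Equiv.Perm V) (n : Sym2 V → ℕ) (u v : V) :
    curShift φ n s(u, v) = n s(φ u, φ v) := by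
  rw [curShift, Sym2.map_pair_eq]

lemma rtg_shift_iff (φ : Equiv.Perm V) {r r' : V → V → Prop}
    (h : ∀ u v, r u v ↔ r' (φ u) (φ v)) (x y : V) :
    ReflTransGen r x y ↔ ReflTransGen r' (φ x) (φ y) := by
  constructor
  · intro hh
    induction hh with
    | refl => exact .refl
    | tail hp hs ih => exact ih.tail ((h _ _).mp hs)
  · intro hh
    have hgen : ∀ a b, ReflTransGen r' a b → ReflTransGen r (φ.symm a) (φ.symm b) := by
      intro a b hab
      induction hab with
      | refl => exact .refl
      | tail hp hs ih =>
        rename_i b c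
        refine ih.tail ?_
        have h2 := (h (φ.symm b) (φ.symm c)).mpr
        simp only [Equiv.apply_symm_apply] at h2
        exact h2 hs
    have h3 := hgen _ _ hh
    simpa using h3

lemma dropE_shift (φ : Equiv.Perm V) (n : Sym2 V → ℕ) (x y : V) :
    dropE (curShift φ n) s(x, y) = curShift φ (dropE n s(φ x, φ y)) := by
  funext e
  show (if e = s(x, y) then 0 else curShift φ n e)
      = dropE n s(φ x, φ y) (Sym2.map φ e)
  rw [show dropE n s(φ x, φ y) (Sym2.map φ e)
      = if Sym2.map φ e = s(φ x, φ y) then 0 else n (Sym2.map φ e) from rfl]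
  by_cases h : e = s(x, y)
  · rw [if_pos h, if_pos (by rw [h, Sym2.map_pair_eq])]
  · rw [if_neg h, if_neg (fun hc => h (Sym2.map.injective φ.injective
      (by rw [hc, Sym2.map_pair_eq])))]
    rfl

lemma connP_shift (φ : Equiv.Perm V) (n : Sym2 V → ℕ) (x y : V) :
    ReflTransGen (stepP (curShift φ n)) x y ↔ ReflTransGen (stepP n) (φ x) (φ y) :=
  rtg_shift_iff φ (fun u v => by rw [stepP, stepP, curShift_pair]) x y

lemma infinite_preimage_iff (φ : Equiv.Perm V) (S : Set V) :
    (φ ⁻¹' S).Infinite ↔ S.Infinite := by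
  constructor
  · intro h
    refine Set.Infinite.mono ?_ (h.image (Set.injOn_of_injective φ.injective))
    exact Set.image_preimage_subset φ S
  · intro h
    exact h.preimage (by rw [Equiv.range_eq_univ]; exact Set.subset_univ S)

lemma inInf_shift (φ : Equiv.Perm V) (n : Sym2 V → ℕ) (x : V) :
    inInf (curShift φ n) x ↔ inInf n (φ x) := by
  rw [inInf, inInf, cluster_eq_rtg, cluster_eq_rtg]
  have heq : {z | ReflTransGen (stepP (curShift φ n)) x z}
      = φ ⁻¹' {z | ReflTransGen (stepP n) (φ x) z} := by
    ext z; exact connP_shift φ n x z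
  rw [heq, infinite_preimage_iff]

lemma eventA_shift (φ : Equiv.Perm V) (n : Sym2 V → ℕ) (a b : V) :
    eventA a b (curShift φ n) ↔ eventA (φ a) (φ b) n := by
  simp only [eventA]
  rw [curShift_pair, dropE_shift]
  refine and_congr Iff.rfl (and_congr ?_ (and_congr ?_ ?_))
  · exact inInf_shift φ _ a
  · exact inInf_shift φ _ b
  · rw [not_iff_not, conn_iff_rtg, conn_iff_rtg]
    exact connP_shift φ _ a b

lemma usetMem_shift (φ : Equiv.Perm V) (n : Sym2 V → ℕ) (u v : V) :
    s(u, v) ∈ Uset (curShift φ n) ↔ s(φ u, φ v) ∈ Uset n := by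
  constructor
  · rintro ⟨a, b, hab, hA⟩
    refine ⟨φ a, φ b, ?_, (eventA_shift φ n a b).mp hA⟩
    rcases Sym2.eq_iff.mp hab with ⟨rfl, rfl⟩ | ⟨rfl, rfl⟩
    · rfl
    · exact Sym2.eq_swap
  · rintro ⟨a, b, hab, hA⟩
    refine ⟨φ.symm a, φ.symm b, ?_, ?_⟩
    · rcases Sym2.eq_iff.mp hab with ⟨h1, h2⟩ | ⟨h1, h2⟩
      · rw [Sym2.eq_iff]
        left
        constructor
        · rw [← h1, Equiv.symm_apply_apply]
        · rw [← h2, Equiv.symm_apply_apply]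
      · rw [Sym2.eq_iff]
        right
        constructor
        · rw [← h1, Equiv.symm_apply_apply]
        · rw [← h2, Equiv.symm_apply_apply]
    · refine (eventA_shift φ n _ _).mpr ?_
      simpa using hA

lemma stepU_shift (φ : Equiv.Perm V) (n : Sym2 V → ℕ) (u v : V) :
    stepU (curShift φ n) u v ↔ stepU n (φ u) (φ v) := by
  rw [stepU, stepU, curShift_pair]
  exact and_congr Iff.rfl (not_iff_not.mpr (usetMem_shift φ n u v))

lemma connW_shift (φ : Equiv.Perm V) (n : Sym2 V → ℕ) (x y : V) :
    ReflTransGen (stepU (curShift φ n)) x y ↔ ReflTransGen (stepU n) (φ x) (φ y) :=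
  rtg_shift_iff φ (stepU_shift φ n) x y

lemma zeta_shift (φ : Equiv.Perm V) (n : Sym2 V → ℕ) (v : V) :
    zetaP v (curShift φ n) ↔ zetaP (φ v) n := by
  rw [zetaP, zetaP]
  refine and_congr ?_ ?_
  · constructor
    · rintro ⟨w, hw⟩
      exact ⟨φ w, (usetMem_shift φ n v w).mp hw⟩
    · rintro ⟨w, hw⟩
      refine ⟨φ.symm w, ?_⟩
      rw [usetMem_shift φ]
      simpa using hw
  · have heq : {z | ReflTransGen (stepU (curShift φ n)) v z}
        = φ ⁻¹' {z | ReflTransGen (stepU n) (φ v) z} := by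
      ext z; exact connW_shift φ n v z
    rw [heq, infinite_preimage_iff]

end Aux

/-- Lemma 3.2: (i) the probability of two edge-disjoint paths from `x` to `y` tends
to `0` as `y → ∞`; (ii) a.s. there are no three edge-disjoint infinite paths from
any vertex. -/
theorem statement12
    {V : Type*} [DecidableEq V] [Countable V] [Infinite V]
    (G : SimpleGraph V) (hlf : G.LocallyFinite) (o : V)
    (Γ : Subgroup (Equiv.Perm V))
    (hAut : ∀ φ ∈ Γ, ∀ x y : V, G.Adj (φ x) (φ y) ↔ G.Adj x y)
    (hTrans : ∀ x y : V, ∃ φ ∈ Γ, φ x = y)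
    (P : Measure (Sym2 V → ℕ)) (hprob : IsProbabilityMeasure P)
    (hinv : curInvariant Γ P) (herg : curErgodic Γ P)
    (hU : 0 < P {n | (Uset n).Nonempty})
    (hgeo : ∀ᵐ n ∂P, (∃ x, inInf n x) ∧ uniqueInfCluster n ∧
      ∀ x, inInf n x → atMostEnds n x 2) :
    ∀ x : V,
      Tendsto (fun y => P {n | kPaths n x y 2})
        (comap (fun y : V => G.dist o y) atTop) (nhds 0) ∧
      P {n | kInfPaths n x 3} = 0 := by
  classical
  have hAset : {n : Sym2 V → ℕ | (Uset n).Nonempty}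
      = {n : Sym2 V → ℕ | ∃ a b : V, eventA a b n} := by
    ext n
    simp only [Set.mem_setOf_eq]
    constructor
    · rintro ⟨e, a, b, he, hA⟩
      exact ⟨a, b, hA⟩
    · rintro ⟨a, b, hA⟩
      exact ⟨s(a, b), a, b, rfl, hA⟩
  have hAmeas : MeasurableSet {n : Sym2 V → ℕ | ∃ a b : V, eventA a b n} := by
    have heq : {n : Sym2 V → ℕ | ∃ a b : V, eventA a b n}
        = ⋃ (a : V) (b : V), {n | eventA a b n} := by
      ext n; simp only [Set.mem_setOf_eq, Set.mem_iUnion]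
    rw [heq]
    exact MeasurableSet.iUnion fun a => MeasurableSet.iUnion fun b => measurableSet_eventA a b
  have hAinv : ∀ φ ∈ Γ, curShift φ ⁻¹' {n : Sym2 V → ℕ | ∃ a b : V, eventA a b n}
      = {n : Sym2 V → ℕ | ∃ a b : V, eventA a b n} := by
    intro φ hφ
    ext n
    simp only [Set.mem_preimage, Set.mem_setOf_eq]
    constructor
    · rintro ⟨a, b, h⟩
      exact ⟨φ a, φ b, (eventA_shift φ n a b).mp h⟩
    · rintro ⟨a, b, h⟩
      refine ⟨φ.symm a, φ.symm b, (eventA_shift φ n _ _).mpr ?_⟩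
      simpa using h
  have hU1 : P {n : Sym2 V → ℕ | ∃ a b : V, eventA a b n} = 1 := by
    rcases herg _ hAmeas hAinv with h0 | h1
    · rw [hAset, h0] at hU
      exact absurd hU (lt_irrefl 0)
    · exact h1
  have haeU : ∀ᵐ n ∂P, ∃ a b : V, eventA a b n := by
    have hc : P {n : Sym2 V → ℕ | ∃ a b : V, eventA a b n}ᶜ = 0 := by
      rw [measure_compl hAmeas (measure_ne_top P _), hU1, measure_univ]
      simp
    rw [ae_iff]
    exact hc
  have hzconst : ∀ v w : V, P {n : Sym2 V → ℕ | zetaP v n} = P {n : Sym2 V → ℕ | zetaP w n} := by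
    intro v w
    obtain ⟨φ, hφ, hvw⟩ := hTrans v w
    have hpre : curShift φ ⁻¹' {m : Sym2 V → ℕ | zetaP v m} = {n : Sym2 V → ℕ | zetaP w n} := by
      ext n
      simp only [Set.mem_preimage, Set.mem_setOf_eq]
      rw [zeta_shift φ n v, hvw]
    calc P {n : Sym2 V → ℕ | zetaP v n}
        = Measure.map (curShift φ) P {m : Sym2 V → ℕ | zetaP v m} := by rw [hinv φ hφ]
      _ = P (curShift φ ⁻¹' {m : Sym2 V → ℕ | zetaP v m}) :=
          Measure.map_apply (measurable_curShift φ) (measurableSet_zeta v)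
      _ = P {n : Sym2 V → ℕ | zetaP w n} := by rw [hpre]
  have haeB : ∀ᵐ n ∂P,
      ∑' v : V, ({n : Sym2 V → ℕ | zetaP v n}).indicator (1 : (Sym2 V → ℕ) → ENNReal) n ≤ 12 := by
    filter_upwards [hgeo] with n hn
    refine le_trans (le_of_eq ENNReal.tsum_eq_iSup_sum) (iSup_le fun F => ?_)
    have hsum : ∑ v ∈ F, ({n : Sym2 V → ℕ | zetaP v n}).indicator (1 : (Sym2 V → ℕ) → ENNReal) n
        = ((F.filter (fun v => zetaP v n)).card : ENNReal) := by
      rw [← Finset.sum_boole]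
      refine Finset.sum_congr rfl ?_
      intro v _
      rw [Set.indicator_apply]
      simp only [Set.mem_setOf_eq, Pi.one_apply]
    rw [hsum]
    have hcard := zeta_card_bound hn.2.1 hn.2.2 (F.filter (fun v => zetaP v n))
      (fun v hv => (Finset.mem_filter.mp hv).2)
    exact_mod_cast hcard
  have hz0 : ∀ v : V, P {n : Sym2 V → ℕ | zetaP v n} = 0 := by
    by_contra hc
    push_neg at hc
    obtain ⟨v0, hv0⟩ := hc
    set c := P {n : Sym2 V → ℕ | zetaP v0 n} with hcdef
    have hsum_le : ∑' v : V, P {n : Sym2 V → ℕ | zetaP v n} ≤ 12 := by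
      have hmeasInd : ∀ v : V,
          Measurable (({n : Sym2 V → ℕ | zetaP v n}).indicator (1 : (Sym2 V → ℕ) → ENNReal)) :=
        fun v => Measurable.indicator (s := {n : Sym2 V → ℕ | zetaP v n}) measurable_one
          (measurableSet_zeta v)
      calc ∑' v : V, P {n : Sym2 V → ℕ | zetaP v n}
          = ∑' v : V, ∫⁻ n, ({n : Sym2 V → ℕ | zetaP v n}).indicator (1 : (Sym2 V → ℕ) → ENNReal) n ∂P := by
            exact tsum_congr fun v => (lintegral_indicator_one (measurableSet_zeta v)).symm
        _ = ∫⁻ n, ∑' v : V, ({n : Sym2 V → ℕ | zetaP v n}).indicator (1 : (Sym2 V → ℕ) → ENNReal) n ∂P :=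
            (lintegral_tsum (fun v => (hmeasInd v).aemeasurable)).symm
        _ ≤ ∫⁻ _, 12 ∂P := lintegral_mono_ae haeB
        _ = 12 := by rw [lintegral_const, measure_univ, mul_one]
    have hterm : ∀ k : ℕ, (k : ENNReal) * c ≤ 12 := by
      intro k
      obtain ⟨F, hF⟩ := Infinite.exists_subset_card_eq V k
      calc (k : ENNReal) * c = ∑ _v ∈ F, c := by rw [Finset.sum_const, hF, nsmul_eq_mul]
        _ = ∑ v ∈ F, P {n : Sym2 V → ℕ | zetaP v n} :=
            Finset.sum_congr rfl (fun v _ => hzconst v0 v)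
        _ ≤ ∑' v : V, P {n : Sym2 V → ℕ | zetaP v n} := ENNReal.sum_le_tsum F
        _ ≤ 12 := hsum_le
    rcases eq_or_ne c ⊤ with htop | htop
    · have h1 := hterm 1
      rw [htop] at h1
      simp at h1
    · obtain ⟨k, hk⟩ := ENNReal.exists_nat_gt (r := (12 : ENNReal) / c) (ENNReal.div_lt_top (by norm_num) hv0).ne
      have h12 : (12 : ENNReal) < k * c := by
        rw [← ENNReal.div_lt_iff (Or.inl hv0) (Or.inl htop)]
        exact hk
      exact absurd (hterm k) (not_le.mpr h12)
  have haeZ : ∀ᵐ n ∂P, ∀ v : V, ¬ zetaP v n := by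
    rw [ae_all_iff]
    intro v
    rw [ae_iff]
    simpa only [not_not] using hz0 v
  have hQae : ∀ᵐ n ∂P, uniqueInfCluster n ∧ (∀ x, inInf n x → atMostEnds n x 2)
      ∧ (∃ a b : V, eventA a b n) ∧ (∀ v : V, ¬ zetaP v n) := by
    filter_upwards [hgeo, haeU, haeZ] with n h1 h2 h3
    exact ⟨h1.2.1, h1.2.2, h2, h3⟩
  intro x
  constructor
  · -- part (i)
    rw [ENNReal.tendsto_nhds_zero]
    intro ε hε
    have hVfin : {y : V | ε < P {n : Sym2 V → ℕ | Relation.ReflTransGen (stepU n) x y}}.Finite := by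
      by_contra hVinf
      replace hVinf : {y : V | ε < P {n : Sym2 V → ℕ | Relation.ReflTransGen (stepU n) x y}}.Infinite := hVinf
      set emb := Set.Infinite.natEmbedding _ hVinf with hemb
      set g : ℕ → V := fun k => (emb k).1 with hg
      have hginj : Function.Injective g := fun k1 k2 h =>
        emb.injective (Subtype.coe_injective h)
      have hgmem : ∀ k, ε < P {n : Sym2 V → ℕ | Relation.ReflTransGen (stepU n) x (g k)} :=
        fun k => (emb k).2
      have hlim : Tendsto (fun k => ∫⁻ n,
          ({n : Sym2 V → ℕ | Relation.ReflTransGen (stepU n) x (g k)}).indicator (1 : (Sym2 V → ℕ) → ENNReal) n ∂P)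
          atTop (nhds (∫⁻ _, (0 : ENNReal) ∂P)) := by
        refine tendsto_lintegral_of_dominated_convergence (fun _ => (1 : ENNReal)) ?_ ?_ ?_ ?_
        · exact fun k => measurable_one.indicator (measurableSet_connW x (g k))
        · intro k
          refine Filter.Eventually.of_forall (fun n => ?_)
          rw [Set.indicator_apply]
          split_ifs <;> simp
        · rw [lintegral_const, measure_univ, mul_one]
          exact ENNReal.one_ne_top
        · filter_upwards [hQae] with n hn
          have hKfin := comp_finite hn.1 hn.2.2.1 hn.2.2.2 x
          have hev : ∀ᶠ k in atTop,
              ({n' : Sym2 V → ℕ | Relation.ReflTransGen (stepU n') x (g k)}).indicator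
                (fun _ => (1 : ENNReal)) n = 0 := by
            have hpre : {k | g k ∈ {z | Relation.ReflTransGen (stepU n) x z}}.Finite :=
              Set.Finite.preimage (Set.injOn_of_injective hginj) hKfin
            obtain ⟨N, hN⟩ := hpre.bddAbove
            rw [Filter.eventually_atTop]
            refine ⟨N + 1, fun k hk => ?_⟩
            rw [Set.indicator_apply, if_neg]
            intro hcm
            have hkN : k ≤ N := hN hcm
            omega
          exact Tendsto.congr' (hev.mono fun k h => h.symm) tendsto_const_nhds
      rw [lintegral_zero] at hlim
      have hlim' : Tendsto (fun k => P {n : Sym2 V → ℕ | Relation.ReflTransGen (stepU n) x (g k)})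
          atTop (nhds 0) := by
        refine hlim.congr (fun k => ?_)
        rw [lintegral_indicator_one (measurableSet_connW x (g k))]
      obtain ⟨k, hk⟩ := (hlim'.eventually_lt_const hε).exists
      exact absurd (hgmem k) (not_lt.mpr (le_of_lt hk))
    set FinV := hVfin.toFinset with hFinV
    set N := (FinV.sup (fun y => G.dist o y)) + 1 with hNdef
    rw [Filter.eventually_comap, Filter.eventually_atTop]
    refine ⟨N, fun d hd y hyd => ?_⟩
    have hyV : y ∉ {y : V | ε < P {n : Sym2 V → ℕ | Relation.ReflTransGen (stepU n) x y}} := by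
      intro hy
      have hmemF : y ∈ FinV := by
        rw [hFinV, Set.Finite.mem_toFinset]
        exact hy
      have hle : G.dist o y ≤ FinV.sup (fun y => G.dist o y) := Finset.le_sup hmemF
      omega
    have hle : P {n : Sym2 V → ℕ | Relation.ReflTransGen (stepU n) x y} ≤ ε := not_lt.mp hyV
    refine le_trans (measure_mono ?_) hle
    intro n hn
    exact kpaths_avoid x y hn
  · -- part (ii)
    refine measure_mono_null ?_ (ae_iff.mp hQae)
    intro n hn
    exact fun hQ => no_three_rays hQ.1 hQ.2.1 hQ.2.2.1 hQ.2.2.2 x hn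


end RC
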